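/- arXiv:1706.05247 — 6 statements merged into one kernel-verified Lean document; each statement's English description precedes it below -/
import Mathlib

section
/- Let ν > 0, λ ∈ ℝ, and let v : (0,1] → ℂ be a bounded C² solution of -v'' - (1/r) v' + (ν²/r²) v = λ v on (0,1]. Write v in the representation v(r) = r^{ν}(c₁ + (λ/(2ν)) ∫_r^1 s^{1-ν} v ds) + r^{-ν}(c₂ - (λ/(2ν)) ∫_r^1 s^{1+ν} v ds). If moreover |v(r)| ≤ C r^{γ} for some C > 0 and γ > 0 and all r ∈ (0,1], then necessarily c₂ = (λ/(2ν)) ∫_0^1 s^{1+ν} v(s) ds; that is, the coefficient of the singular part vanishes in the sense that r^{-ν}(c₂ - (λ/(2ν)) ∫_r^1 s^{1+ν} v ds) → 0 as r → 0⁺. -/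
/-!
Rearranging the representation, the singular part is `v` minus the regular part
`r^ν (c₁ + K ∫_r^1 s^{1-ν} v)`, with `K = λ/(2ν)`. Both tend to `0` as `r → 0⁺`: `v` by the bound
`C r^γ`, and the regular part because `r^ν s^{1-ν} ≤ r^ν + r` for `r ≤ s ≤ 1`. Multiplying by
`r^ν`, the bracket `c₂ - K ∫_r^1 s^{1+ν} v` tends to `0`; since `s^{1+ν} v` is bounded and
integrable on `(0, 1]`, it also tends to `c₂ - K ∫_0^1 s^{1+ν} v`.
-/
open Set MeasureTheory intervalIntegral Filter Topology

lemma tendsto_rpow_nhdsGT_zero {p : ℝ} (hp : 0 < p) :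
    Tendsto (fun r : ℝ => r ^ p) (𝓝[>] 0) (𝓝 0) := by
  simpa [Real.zero_rpow hp.ne'] using
    (Real.continuousAt_rpow_const 0 p (Or.inr hp.le)).tendsto.mono_left nhdsWithin_le_nhds

lemma tendsto_integral_nhdsGT_left {E : Type*} [NormedAddCommGroup E] [NormedSpace ℝ E]
    {u : ℝ → E} {a b : ℝ} (hab : a < b) (hu : IntervalIntegrable u volume a b) :
    Tendsto (fun r => ∫ s in r..b, u s) (𝓝[>] a) (𝓝 (∫ s in a..b, u s)) := by
  have hcont := continuousOn_primitive_interval_left ((intervalIntegrable_iff' (by simp)).1 hu)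
  refine (hcont a left_mem_uIcc).tendsto.mono_left (nhdsWithin_le_of_mem ?_)
  rw [uIcc_of_le hab.le]
  exact Icc_mem_nhdsGT hab

lemma intervalIntegrable_of_continuousOn_Ioc_of_norm_le {E : Type*} [NormedAddCommGroup E]
    {u : ℝ → E} {a b B : ℝ} (hab : a ≤ b) (hu : ContinuousOn u (Ioc a b))
    (hB : ∀ s ∈ Ioc a b, ‖u s‖ ≤ B) : IntervalIntegrable u volume a b := by
  rw [intervalIntegrable_iff_integrableOn_Ioc_of_le hab]
  exact Integrable.mono' (integrableOn_const measure_Ioc_lt_top.ne)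
    (hu.aestronglyMeasurable measurableSet_Ioc)
    ((ae_restrict_iff' measurableSet_Ioc).2 (ae_of_all _ hB))

lemma intervalIntegrable_ofReal_rpow_mul {u : ℝ → ℂ} {p B : ℝ} (hp : 0 ≤ p)
    (hu : ContinuousOn u (Ioc 0 1)) (hB : ∀ s ∈ Ioc (0 : ℝ) 1, ‖u s‖ ≤ B) :
    IntervalIntegrable (fun s : ℝ => ((s ^ p : ℝ) : ℂ) * u s) volume 0 1 := by
  refine intervalIntegrable_of_continuousOn_Ioc_of_norm_le (B := B) zero_le_one
    ((Complex.continuous_ofReal.comp_continuousOn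
      (continuousOn_id.rpow_const fun s hs => Or.inl hs.1.ne')).mul hu) fun s hs => ?_
  rw [norm_mul, Complex.norm_real, Real.norm_of_nonneg (Real.rpow_nonneg hs.1.le _)]
  exact (mul_le_of_le_one_left (norm_nonneg _) (Real.rpow_le_one hs.1.le hs.2 hp)).trans (hB s hs)

lemma rpow_mul_rpow_one_sub_le {r s ν : ℝ} (hr : 0 < r) (hrs : r ≤ s) (hs : s ≤ 1) :
    r ^ ν * s ^ (1 - ν) ≤ r ^ ν + r := by
  have hrν : 0 ≤ r ^ ν := Real.rpow_nonneg hr.le ν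
  rcases le_total ν 1 with hν | hν
  · calc r ^ ν * s ^ (1 - ν) ≤ r ^ ν * 1 :=
          mul_le_mul_of_nonneg_left (Real.rpow_le_one (hr.le.trans hrs) hs (by linarith)) hrν
      _ ≤ r ^ ν + r := by linarith
  · calc r ^ ν * s ^ (1 - ν) ≤ r ^ ν * r ^ (1 - ν) :=
          mul_le_mul_of_nonneg_left (Real.rpow_le_rpow_of_nonpos hr hrs (by linarith)) hrν
      _ = r := by rw [← Real.rpow_add hr, add_sub_cancel, Real.rpow_one]
      _ ≤ r ^ ν + r := by linarith

lemma tendsto_rpow_mul_integral_rpow_one_sub_mul {u : ℝ → ℂ} {ν B : ℝ}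
    (hB : ∀ s ∈ Ioc (0 : ℝ) 1, ‖u s‖ ≤ B) (hν : 0 < ν) :
    Tendsto (fun r : ℝ => ((r ^ ν : ℝ) : ℂ) * ∫ s in r..1, ((s ^ (1 - ν) : ℝ) : ℂ) * u s)
      (𝓝[>] 0) (𝓝 0) := by
  refine squeeze_zero_norm' (a := fun r => (r ^ ν + r) * B * |1 - r|) ?_ ?_
  · filter_upwards [Ioo_mem_nhdsGT zero_lt_one] with r ⟨hr0, hr1⟩
    rw [← intervalIntegral.integral_const_mul]
    refine norm_integral_le_of_norm_le_const fun s hs => ?_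
    rw [uIoc_of_le hr1.le] at hs
    have hs0 : 0 < s := hr0.trans hs.1
    rw [← mul_assoc, ← Complex.ofReal_mul, norm_mul, Complex.norm_real, Real.norm_of_nonneg
      (mul_nonneg (Real.rpow_nonneg hr0.le ν) (Real.rpow_nonneg hs0.le _))]
    exact mul_le_mul (rpow_mul_rpow_one_sub_le hr0 hs.1.le hs.2) (hB s ⟨hs0, hs.2⟩)
      (norm_nonneg _) (by positivity)
  · have hid : Tendsto (fun r : ℝ => r) (𝓝[>] 0) (𝓝 0) :=
      tendsto_nhdsWithin_of_tendsto_nhds tendsto_id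
    have hdist : Tendsto (fun r : ℝ => |1 - r|) (𝓝[>] 0) (𝓝 1) :=
      tendsto_nhdsWithin_of_tendsto_nhds <|
        (continuous_const.sub continuous_id).abs.tendsto' 0 1 (by simp)
    simpa using (((tendsto_rpow_nhdsGT_zero hν).add hid).mul_const B).mul hdist

lemma tendsto_zero_of_tendsto_rpow_neg_mul {h : ℝ → ℂ} {ν : ℝ} (hν : 0 < ν)
    (hh : Tendsto (fun r : ℝ => ((r ^ (-ν) : ℝ) : ℂ) * h r) (𝓝[>] 0) (𝓝 0)) :
    Tendsto h (𝓝[>] 0) (𝓝 0) := by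
  have hprod : Tendsto (fun r : ℝ => ((r ^ ν : ℝ) : ℂ) * (((r ^ (-ν) : ℝ) : ℂ) * h r))
      (𝓝[>] 0) (𝓝 0) := by
    simpa using (tendsto_rpow_nhdsGT_zero hν).ofReal.mul hh
  refine hprod.congr' ?_
  filter_upwards [self_mem_nhdsWithin] with r hr
  rw [← mul_assoc, ← Complex.ofReal_mul, ← Real.rpow_add hr, add_neg_cancel, Real.rpow_zero,
    Complex.ofReal_one, one_mul]

theorem singular_coefficient_vanishes_general (ν lam : ℝ) (hν : 0 < ν) (v : ℝ → ℂ)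
    (c₁ c₂ : ℂ)
    (hcont : ContinuousOn v (Set.Ioc (0:ℝ) 1))
    (hrep : ∀ r ∈ Set.Ioc (0:ℝ) 1,
      v r = ((r ^ ν : ℝ) : ℂ) *
              (c₁ + ((lam/(2*ν) : ℝ) : ℂ) * ∫ s in r..1, ((s ^ (1 - ν) : ℝ) : ℂ) * v s)
          + ((r ^ (-ν) : ℝ) : ℂ) *
              (c₂ - ((lam/(2*ν) : ℝ) : ℂ) * ∫ s in r..1, ((s ^ (1 + ν) : ℝ) : ℂ) * v s))
    (C γ : ℝ) (hC : 0 < C) (hγ : 0 < γ)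
    (hbd : ∀ r ∈ Set.Ioc (0:ℝ) 1, ‖v r‖ ≤ C * r ^ γ) :
    c₂ = ((lam/(2*ν) : ℝ) : ℂ) * ∫ s in (0:ℝ)..1, ((s ^ (1 + ν) : ℝ) : ℂ) * v s ∧
    Tendsto (fun r : ℝ => ((r ^ (-ν) : ℝ) : ℂ) *
        (c₂ - ((lam/(2*ν) : ℝ) : ℂ) * ∫ s in r..1, ((s ^ (1 + ν) : ℝ) : ℂ) * v s))
      (𝓝[>] (0:ℝ)) (𝓝 0) := by
  set K : ℂ := ((lam / (2 * ν) : ℝ) : ℂ)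
  have hnear : ∀ᶠ r in 𝓝[>] (0 : ℝ), r ∈ Ioc (0 : ℝ) 1 := Ioc_mem_nhdsGT zero_lt_one
  have hvC : ∀ s ∈ Ioc (0 : ℝ) 1, ‖v s‖ ≤ C := fun s hs => (hbd s hs).trans
    (mul_le_of_le_one_right hC.le (Real.rpow_le_one hs.1.le hs.2 hγ.le))
  have hv0 : Tendsto v (𝓝[>] 0) (𝓝 0) :=
    squeeze_zero_norm' (hnear.mono hbd) (by simpa using (tendsto_rpow_nhdsGT_zero hγ).const_mul C)
  have hregular : Tendsto (fun r : ℝ => ((r ^ ν : ℝ) : ℂ) *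
      (c₁ + K * ∫ s in r..1, ((s ^ (1 - ν) : ℝ) : ℂ) * v s)) (𝓝[>] 0) (𝓝 0) := by
    simpa [mul_add, mul_left_comm] using ((tendsto_rpow_nhdsGT_zero hν).ofReal.mul_const c₁).add
      ((tendsto_rpow_mul_integral_rpow_one_sub_mul hvC hν).const_mul K)
  have hsingular := (sub_zero (0 : ℂ) ▸ hv0.sub hregular).congr' <|
    hnear.mono fun r hr => by rw [hrep r hr, add_sub_cancel_left]
  have hf := intervalIntegrable_ofReal_rpow_mul (by positivity : 0 ≤ 1 + ν) hcont hvC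
  have hlim := tendsto_const_nhds (x := c₂) |>.sub
    ((tendsto_integral_nhdsGT_left zero_lt_one hf).const_mul K)
  have hcoeff := tendsto_zero_of_tendsto_rpow_neg_mul hν hsingular
  exact ⟨sub_eq_zero.1 (tendsto_nhds_unique hlim hcoeff), hsingular⟩

/-- If a bounded `C²` solution of the Bessel-type ODE, written in the representation
`v(r) = r^ν (c₁ + (λ/(2ν)) ∫_r^1 s^{1-ν} v ds) + r^{-ν} (c₂ - (λ/(2ν)) ∫_r^1 s^{1+ν} v ds)`,
satisfies `|v(r)| ≤ C r^γ` with `C, γ > 0`, then necessarily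
`c₂ = (λ/(2ν)) ∫_0^1 s^{1+ν} v ds`, i.e. the singular part tends to `0` as `r → 0⁺`. -/
theorem singular_coefficient_vanishes (ν lam : ℝ) (hν : 0 < ν) (v v' v'' : ℝ → ℂ)
    (c₁ c₂ : ℂ)
    (hcont : ContinuousOn v (Set.Ioc (0:ℝ) 1))
    (hv : ∀ r ∈ Set.Ioc (0:ℝ) 1, HasDerivAt v (v' r) r)
    (hv' : ∀ r ∈ Set.Ioc (0:ℝ) 1, HasDerivAt v' (v'' r) r)
    (hode : ∀ r ∈ Set.Ioc (0:ℝ) 1,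
      -(v'' r) - (1/(r:ℂ)) * v' r + (((ν^2 : ℝ) : ℂ)/(r:ℂ)^2) * v r = (lam:ℂ) * v r)
    (hrep : ∀ r ∈ Set.Ioc (0:ℝ) 1,
      v r = ((r ^ ν : ℝ) : ℂ) *
              (c₁ + ((lam/(2*ν) : ℝ) : ℂ) * ∫ s in r..1, ((s ^ (1 - ν) : ℝ) : ℂ) * v s)
          + ((r ^ (-ν) : ℝ) : ℂ) *
              (c₂ - ((lam/(2*ν) : ℝ) : ℂ) * ∫ s in r..1, ((s ^ (1 + ν) : ℝ) : ℂ) * v s))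
    (C γ : ℝ) (hC : 0 < C) (hγ : 0 < γ)
    (hbd : ∀ r ∈ Set.Ioc (0:ℝ) 1, ‖v r‖ ≤ C * r ^ γ) :
    c₂ = ((lam/(2*ν) : ℝ) : ℂ) * ∫ s in (0:ℝ)..1, ((s ^ (1 + ν) : ℝ) : ℂ) * v s ∧
    Tendsto (fun r : ℝ => ((r ^ (-ν) : ℝ) : ℂ) *
        (c₂ - ((lam/(2*ν) : ℝ) : ℂ) * ∫ s in r..1, ((s ^ (1 + ν) : ℝ) : ℂ) * v s))
      (𝓝[>] (0:ℝ)) (𝓝 0) :=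
  singular_coefficient_vanishes_general ν lam hν v c₁ c₂ hcont hrep C γ hC hγ hbd
end

section
/- Let f : ℝ² → ℝ be a function that is real-analytic in a neighborhood of 0, and suppose there exist γ > 0 non-integer and, for every unit vector p ∈ ℝ² with |p| = 1, a constant C_p > 0 and δ_p > 0 such that |f(tp)| ≤ C_p t^{γ} for all t ∈ (0, δ_p). Then |f(a)| = O(|a|^{1 + ⌊γ⌋}) as |a| → 0, where ⌊γ⌋ is the floor of γ. -/
/-!
Along the ray through a unit vector `u`, the Taylor series of `f` at `0` becomes the
one-variable series `∑ₖ tᵏ pₖ(u, …, u)`. A bound `O(t^γ)` as `t → 0⁺` kills its coefficients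
one at a time for every `k < γ`, since `tᵏ c = o(tᵏ)` forces `c = 0`. By homogeneity `pₖ` then
vanishes on the whole diagonal for `k ≤ ⌊γ⌋` (and `⌊γ⌋ < γ` as `γ` is not an integer), so the
Taylor remainder estimate gives `f a = O(‖a‖ ^ (⌊γ⌋ + 1))`.
-/

open Filter Topology Asymptotics

lemma eq_zero_of_smul_isLittleO_self {𝕜 F α : Type*} [NormedField 𝕜] [NormedAddCommGroup F]
    [NormedSpace 𝕜 F] {l : Filter α} [l.NeBot] {u : α → 𝕜} {c : F}
    (hu : ∀ᶠ x in l, u x ≠ 0) (h : (fun x => u x • c) =o[l] u) : c = 0 := by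
  refine norm_le_zero_iff.mp (le_of_forall_pos_le_add fun ε hε => ?_)
  obtain ⟨x, hx, hux⟩ := ((h.def hε).and hu).exists
  rw [norm_smul, mul_comm] at hx
  simpa using le_of_mul_le_mul_right hx (norm_pos_iff.mpr hux)

lemma rpow_isLittleO_pow_nhdsGT_zero {k : ℕ} {γ : ℝ} (hk : (k : ℝ) < γ) :
    (fun t : ℝ => t ^ γ) =o[𝓝[>] 0] fun t => t ^ k := by
  have hsmall : (fun t : ℝ => t ^ (γ - k)) =o[𝓝[>] 0] fun _ => (1 : ℝ) := by
    rw [isLittleO_one_iff]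
    have := (Real.continuousAt_rpow_const 0 (γ - k) (Or.inr (sub_pos.mpr hk).le)).tendsto
    rw [Real.zero_rpow (sub_pos.mpr hk).ne'] at this
    exact this.mono_left nhdsWithin_le_nhds
  refine ((isBigO_refl (fun t : ℝ => t ^ k) _).mul_isLittleO hsmall).congr' ?_ (by simp)
  filter_upwards [self_mem_nhdsWithin] with t ht
  rw [← Real.rpow_natCast, ← Real.rpow_add ht, add_sub_cancel]

lemma isBigO_rpow_nhdsGT_zero_of_bound {g : ℝ → ℝ} {γ C δ : ℝ} (hδ : 0 < δ)
    (h : ∀ t ∈ Set.Ioo 0 δ, |g t| ≤ C * t ^ γ) : g =O[𝓝[>] 0] fun t => t ^ γ := by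
  refine IsBigO.of_bound C ?_
  filter_upwards [Ioo_mem_nhdsGT hδ] with t ht
  rw [Real.norm_eq_abs, Real.norm_eq_abs, abs_of_nonneg (Real.rpow_nonneg ht.1.le γ)]
  exact h t ht

variable {E F : Type*} [NormedAddCommGroup E] [NormedSpace ℝ E] [NormedAddCommGroup F]
  [NormedSpace ℝ F]

lemma ContinuousMultilinearMap.apply_const_eq_zero_of_norm_eq_one [Nontrivial E] {k : ℕ}
    (m : ContinuousMultilinearMap ℝ (fun _ : Fin k => E) F)
    (h : ∀ u : E, ‖u‖ = 1 → m (fun _ => u) = 0) (y : E) : m (fun _ => y) = 0 := by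
  obtain ⟨c, u, hu, rfl⟩ : ∃ (c : ℝ) (u : E), ‖u‖ = 1 ∧ y = c • u := by
    rcases eq_or_ne y 0 with rfl | hy
    · obtain ⟨u, hu⟩ := exists_norm_eq E zero_le_one
      exact ⟨0, u, hu, by simp⟩
    · exact ⟨‖y‖, ‖y‖⁻¹ • y, norm_smul_inv_norm hy, by
        rw [smul_smul, mul_inv_cancel₀ (norm_ne_zero_iff.mpr hy), one_smul]⟩
  simpa [h u hu] using m.map_smul_univ (fun _ => c) (fun _ => u)

namespace FormalMultilinearSeries

lemma partialSum_succ_eq_pow_smul_coeff {q : FormalMultilinearSeries ℝ ℝ F} {k : ℕ}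
    (hq : ∀ j < k, q.coeff j = 0) (t : ℝ) : q.partialSum (k + 1) t = t ^ k • q.coeff k := by
  rw [partialSum, Finset.sum_range_succ, Finset.sum_eq_zero, zero_add, q.apply_eq_pow_smul_coeff]
  intro j hj
  rw [q.apply_eq_pow_smul_coeff, hq j (Finset.mem_range.mp hj), smul_zero]

end FormalMultilinearSeries

namespace HasFPowerSeriesAt

theorem coeff_eq_zero_of_isBigO_rpow {g : ℝ → F} {q : FormalMultilinearSeries ℝ ℝ F}
    (hg : HasFPowerSeriesAt g q 0) {γ : ℝ} (h : g =O[𝓝[>] 0] fun t => t ^ γ) :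
    ∀ k : ℕ, (k : ℝ) < γ → q.coeff k = 0 := by
  intro k
  induction k using Nat.strong_induction_on with
  | _ k ih =>
    intro hk
    have hlower : ∀ j < k, q.coeff j = 0 := fun j hj =>
      ih j hj (lt_trans (by exact_mod_cast hj) hk)
    have htaylor : (fun t => g t - t ^ k • q.coeff k) =o[𝓝[>] 0] fun t => t ^ k := by
      have hrem := (hg.isBigO_sub_partialSum_pow (k + 1)).mono (nhdsWithin_le_nhds (s := Set.Ioi 0))
      simp only [zero_add, q.partialSum_succ_eq_pow_smul_coeff hlower] at hrem
      refine hrem.trans_isLittleO ?_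
      simpa only [norm_pow] using
        ((isLittleO_pow_pow (𝕜 := ℝ) k.lt_succ_self).mono
          (nhdsWithin_le_nhds (s := Set.Ioi 0))).norm_left
    refine eq_zero_of_smul_isLittleO_self (𝕜 := ℝ) (l := 𝓝[>] (0 : ℝ)) (u := fun t => t ^ k) ?_ ?_
    · filter_upwards [self_mem_nhdsWithin] with t ht using pow_ne_zero k (ne_of_gt ht)
    · simpa using (h.trans_isLittleO (rpow_isLittleO_pow_nhdsGT_zero hk)).sub htaylor

theorem apply_eq_zero_of_isBigO_rpow_smul {f : E → F} {p : FormalMultilinearSeries ℝ E F}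
    (hf : HasFPowerSeriesAt f p 0) {u : E} {γ : ℝ}
    (h : (fun t : ℝ => f (t • u)) =O[𝓝[>] 0] fun t => t ^ γ) {k : ℕ} (hk : (k : ℝ) < γ) :
    p k (fun _ => u) = 0 := by
  have hray : HasFPowerSeriesAt (fun t : ℝ => f (t • u))
      (p.compContinuousLinearMap (ContinuousLinearMap.toSpanSingleton ℝ u)) 0 :=
    HasFPowerSeriesAt.compContinuousLinearMap (u := ContinuousLinearMap.toSpanSingleton ℝ u)
      (by rwa [map_zero])
  have hcoeff := hray.coeff_eq_zero_of_isBigO_rpow h k hk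
  rwa [FormalMultilinearSeries.coeff, FormalMultilinearSeries.compContinuousLinearMap_apply,
    show (ContinuousLinearMap.toSpanSingleton ℝ u ∘ 1 : Fin k → E) = fun _ => u by
      ext; simp] at hcoeff

theorem isBigO_norm_pow_of_apply_eq_zero {f : E → F} {p : FormalMultilinearSeries ℝ E F}
    (hf : HasFPowerSeriesAt f p 0) {n : ℕ} (h : ∀ k ≤ n, ∀ y, p k (fun _ => y) = 0) :
    f =O[𝓝 0] fun y => ‖y‖ ^ (n + 1) := by
  have hsum : ∀ y, p.partialSum (n + 1) y = 0 := fun y =>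
    Finset.sum_eq_zero fun k hk => h k (Nat.lt_succ_iff.mp (Finset.mem_range.mp hk)) y
  simpa only [zero_add, hsum, sub_zero] using hf.isBigO_sub_partialSum_pow (n + 1)

end HasFPowerSeriesAt

/-- If `f : ℝ² → ℝ` is real-analytic near `0`, `γ > 0` is non-integer, and along every ray
`{tp : t > 0}` one has `|f(tp)| ≤ C_p t^γ` for small `t`, then `|f(a)| = O(|a|^{1+⌊γ⌋})`
as `|a| → 0`. -/
theorem analytic_directional_bound_implies_order
    (f : EuclideanSpace ℝ (Fin 2) → ℝ) (hf : AnalyticAt ℝ f 0)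
    (γ : ℝ) (hγ : 0 < γ) (hγ' : ∀ n : ℤ, γ ≠ (n:ℝ))
    (hdir : ∀ p : EuclideanSpace ℝ (Fin 2), ‖p‖ = 1 →
      ∃ C > (0:ℝ), ∃ δ > (0:ℝ), ∀ t ∈ Set.Ioo (0:ℝ) δ, |f (t • p)| ≤ C * t ^ γ) :
    ∃ C > (0:ℝ), ∃ δ > (0:ℝ), ∀ a : EuclideanSpace ℝ (Fin 2),
      ‖a‖ < δ → |f a| ≤ C * ‖a‖ ^ (1 + (⌊γ⌋ : ℝ)) := by
  obtain ⟨p, hp⟩ := hf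
  set N := ⌊γ⌋₊
  have hfloor : (N : ℝ) = ⌊γ⌋ := natCast_floor_eq_intCast_floor hγ.le
  have hNγ : (N : ℝ) < γ :=
    (Nat.floor_le hγ.le).lt_of_ne fun h => hγ' N (by exact_mod_cast h.symm)
  have hradial : ∀ k ≤ N, ∀ u, ‖u‖ = 1 → p k (fun _ => u) = 0 := by
    intro k hk u hu
    obtain ⟨C, -, δ, hδ, hbound⟩ := hdir u hu
    exact hp.apply_eq_zero_of_isBigO_rpow_smul (isBigO_rpow_nhdsGT_zero_of_bound hδ hbound)
      (lt_of_le_of_lt (by exact_mod_cast hk) hNγ)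
  obtain ⟨C, hC, hO⟩ := (hp.isBigO_norm_pow_of_apply_eq_zero fun k hk =>
    (p k).apply_const_eq_zero_of_norm_eq_one (hradial k hk)).exists_pos
  obtain ⟨δ, hδ, hball⟩ := Metric.eventually_nhds_iff.mp hO.bound
  refine ⟨C, hC, δ, hδ, fun a ha => ?_⟩
  have hexp : ‖a‖ ^ (1 + (⌊γ⌋ : ℝ)) = ‖a‖ ^ (N + 1) := by
    rw [← hfloor, add_comm, ← Nat.cast_add_one, Real.rpow_natCast]
  simpa [hexp] using hball (by simpa using ha)
end

section
/- Let n₀ ≥ 1 and, for a parameter a in a punctured neighborhood of 0 ∈ ℝ², let Q_a(z) = Σ_{j,n=1}^{n₀} M_{j,n}(a) z_j \overline{z_n} be a Hermitian quadratic form on ℂ^{n₀} (so M_{j,n}(a) = \overline{M_{n,j}(a)}). Assume: there exist γ > 0, σ : a ↦ σ(a) ≥ 0 with σ(a) = O(|a|^{2γ}), and μ : a ↦ μ(a) ∈ ℝ with μ(a) = O(1) as |a| → 0, such that (i) M_{n₀,n₀}(a) = σ(a)μ(a); (ii) for all j < n₀, M_{j,j}(a) → M_j < 0 as |a| → 0;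 (iii) for all j < n₀, M_{j,n₀}(a) = O(|a|^γ √σ(a)); (iv) for j, n < n₀ with j ≠ n, M_{j,n}(a) = O(|a|^{2γ}); (v) there exists M ∈ ℕ with |a|^{(2+M)γ} = o(σ(a)). Then max over z ∈ ℂ^{n₀} with ‖z‖ = 1 of Q_a(z) equals σ(a)(μ(a) + o(1)) as |a| → 0. -/
/-
Split a unit vector as `z = (w, z_L)` with `t = ‖w‖²`. The diagonal entries off `L` are eventually
`≤ -c < 0`, the cross terms are `O(|a|^γ √σ √t)` and the other off-diagonal terms `O(|a|^{2γ} t)`,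
so for small `a`, absorbing `σμ t` and the `O(|a|^{2γ} t)` terms into half of `-c t`,
`Q_a(z) ≤ σμ - (c/2) t + K |a|^γ √σ √t ≤ σμ + K² |a|^{2γ} σ / (2c)` (maximise over `√t`). Since `e_L` attains `σμ`, the maximum differs from `σμ`
by `O(|a|^{2γ} σ) = o(σ)`.
-/

open Filter Topology Asymptotics Finset

section QuadraticForm

variable {ι : Type*} [Fintype ι]

def quadForm (A : ι → ι → ℂ) (z : ι → ℂ) : ℂ :=
  ∑ j, ∑ n, A j n * z j * starRingEnd ℂ (z n)

def quadFormSphereValues (A : ι → ι → ℂ) : Set ℝ :=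
  {x | ∃ z : ι → ℂ, (∑ j, ‖z j‖ ^ 2) = 1 ∧ x = (quadForm A z).re}

lemma re_mul_mul_conj_self (w x : ℂ) : (w * x * starRingEnd ℂ x).re = w.re * ‖x‖ ^ 2 := by
  rw [mul_assoc, Complex.mul_conj, Complex.normSq_eq_norm_sq, Complex.re_mul_ofReal]

lemma re_mul_mul_conj_le (w x y : ℂ) :
    (w * x * starRingEnd ℂ y).re ≤ ‖w‖ * ‖x‖ * ‖y‖ := by
  simpa only [norm_mul, Complex.norm_conj] using Complex.re_le_norm (w * x * starRingEnd ℂ y)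

lemma re_quadForm_le_sum_diag_add {A : ι → ι → ℂ} {z : ι → ℂ} {E : ℝ} (hE : 0 ≤ E)
    (hoff : ∀ j n, j ≠ n → ‖A j n‖ * ‖z j‖ * ‖z n‖ ≤ E) :
    (quadForm A z).re ≤ ∑ j, (A j j).re * ‖z j‖ ^ 2 + Fintype.card ι ^ 2 * E := by
  classical
  have hterm : ∀ j n, (A j n * z j * starRingEnd ℂ (z n)).re ≤
      (if j = n then (A j j).re * ‖z j‖ ^ 2 else 0) + E := by
    intro j n
    by_cases hjn : j = n
    · subst hjn
      simp only [if_true, re_mul_mul_conj_self, le_add_iff_nonneg_right, hE]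
    · simpa only [hjn, if_false, zero_add] using (re_mul_mul_conj_le _ _ _).trans (hoff j n hjn)
  calc (quadForm A z).re = ∑ j, ∑ n, (A j n * z j * starRingEnd ℂ (z n)).re := by
        simp only [quadForm, Complex.re_sum]
    _ ≤ ∑ j, ∑ n, ((if j = n then (A j j).re * ‖z j‖ ^ 2 else 0) + E) := by
        gcongr with j _ n _; exact hterm j n
    _ = ∑ j, (A j j).re * ‖z j‖ ^ 2 + Fintype.card ι ^ 2 * E := by
        simp only [sum_add_distrib, sum_ite_eq, mem_univ, if_true, sum_const, card_univ,
          nsmul_eq_mul]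
        ring

lemma norm_sq_le_one_sub_norm_sq {z : ι → ℂ} (hz : ∑ j, ‖z j‖ ^ 2 = 1) {i₀ j : ι} (hj : j ≠ i₀) :
    ‖z j‖ ^ 2 ≤ 1 - ‖z i₀‖ ^ 2 := by
  classical
  have h := sum_le_sum_of_subset_of_nonneg (subset_univ {j, i₀}) (f := fun j => ‖z j‖ ^ 2)
    fun _ _ _ => by positivity
  rw [sum_pair hj, hz] at h
  linarith

lemma sum_re_diag_mul_le {A : ι → ι → ℂ} {z : ι → ℂ} (hz : ∑ j, ‖z j‖ ^ 2 = 1) {i₀ : ι} {c : ℝ}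
    (hdiag : ∀ j, j ≠ i₀ → (A j j).re ≤ -c) :
    ∑ j, (A j j).re * ‖z j‖ ^ 2 ≤ (A i₀ i₀).re * ‖z i₀‖ ^ 2 - c * (1 - ‖z i₀‖ ^ 2) := by
  classical
  have hrest : ∑ j ∈ univ.erase i₀, ‖z j‖ ^ 2 = 1 - ‖z i₀‖ ^ 2 := by
    rw [← hz, ← add_sum_erase _ _ (mem_univ i₀), add_sub_cancel_left]
  calc ∑ j, (A j j).re * ‖z j‖ ^ 2
      = (A i₀ i₀).re * ‖z i₀‖ ^ 2 + ∑ j ∈ univ.erase i₀, (A j j).re * ‖z j‖ ^ 2 :=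
        (add_sum_erase _ _ (mem_univ i₀)).symm
    _ ≤ (A i₀ i₀).re * ‖z i₀‖ ^ 2 + ∑ j ∈ univ.erase i₀, -c * ‖z j‖ ^ 2 := by
        gcongr with j hj
        exact hdiag j (ne_of_mem_erase hj)
    _ = (A i₀ i₀).re * ‖z i₀‖ ^ 2 - c * (1 - ‖z i₀‖ ^ 2) := by
        rw [← mul_sum, hrest]; ring

lemma norm_sq_le_one_of_sum_norm_sq_eq_one {z : ι → ℂ} (hz : ∑ j, ‖z j‖ ^ 2 = 1) (i : ι) :
    ‖z i‖ ^ 2 ≤ 1 :=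
  hz ▸ single_le_sum (f := fun j => ‖z j‖ ^ 2) (fun _ _ => by positivity) (mem_univ i)

lemma norm_mul_norm_mul_norm_le {A : ι → ι → ℂ} {z : ι → ℂ} (hz : ∑ j, ‖z j‖ ^ 2 = 1) {i₀ : ι}
    {β δ : ℝ} (hβ : 0 ≤ β) (hδ : 0 ≤ δ) (hA : ∀ j n, A j n = starRingEnd ℂ (A n j))
    (hcross : ∀ j, j ≠ i₀ → ‖A j i₀‖ ≤ β)
    (hoff : ∀ j n, j ≠ i₀ → n ≠ i₀ → j ≠ n → ‖A j n‖ ≤ δ) {j n : ι} (hjn : j ≠ n) :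
    ‖A j n‖ * ‖z j‖ * ‖z n‖ ≤ β * √(1 - ‖z i₀‖ ^ 2) + δ * (1 - ‖z i₀‖ ^ 2) := by
  set t := 1 - ‖z i₀‖ ^ 2
  have ht : 0 ≤ t := sub_nonneg.2 (norm_sq_le_one_of_sum_norm_sq_eq_one hz i₀)
  have hz₀ : ‖z i₀‖ ≤ 1 := (pow_le_one_iff_of_nonneg (norm_nonneg _) two_ne_zero).1
    (norm_sq_le_one_of_sum_norm_sq_eq_one hz i₀)
  have hz' : ∀ k, k ≠ i₀ → ‖z k‖ ≤ √t := fun k hk => by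
    simpa using Real.abs_le_sqrt (norm_sq_le_one_sub_norm_sq hz hk)
  have hβt : 0 ≤ β * √t := by positivity
  have hδt : 0 ≤ δ * t := by positivity
  by_cases hn : n = i₀
  · subst hn
    calc ‖A j n‖ * ‖z j‖ * ‖z n‖ ≤ β * √t * 1 := by
          gcongr; exacts [hcross j hjn, hz' j hjn]
      _ ≤ _ := by linarith
  by_cases hj : j = i₀
  · subst hj
    calc ‖A j n‖ * ‖z j‖ * ‖z n‖ = ‖A n j‖ * ‖z n‖ * ‖z j‖ := by
          rw [hA, Complex.norm_conj]; ring
      _ ≤ β * √t * 1 := by gcongr; exacts [hcross n hn, hz' n hn]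
      _ ≤ _ := by linarith
  calc ‖A j n‖ * ‖z j‖ * ‖z n‖ ≤ δ * √t * √t := by
        gcongr; exacts [hoff j n hj hn hjn, hz' j hj, hz' n hn]
    _ = δ * t := by rw [mul_assoc, Real.mul_self_sqrt ht]
    _ ≤ _ := by linarith

lemma sub_mul_add_mul_sqrt_le {lam c K β δ t : ℝ} (hc : 0 < c) (ht : 0 ≤ t)
    (hlam : -(c / 4) ≤ lam) (hδ : K * δ ≤ c / 4) :
    lam * (1 - t) - c * t + K * (β * √t + δ * t) ≤ lam + (K * β) ^ 2 / (2 * c) := by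
  obtain ⟨s, hs, rfl⟩ : ∃ s, 0 ≤ s ∧ s ^ 2 = t := ⟨√t, Real.sqrt_nonneg t, Real.sq_sqrt ht⟩
  rw [Real.sqrt_sq hs]
  -- completing the square: `(K β - c s)² ≥ 0`
  have hsq : K * β * s - c / 2 * s ^ 2 ≤ (K * β) ^ 2 / (2 * c) := by
    rw [le_div_iff₀ (by positivity)]
    nlinarith [sq_nonneg (K * β - c * s)]
  nlinarith [mul_le_mul_of_nonneg_right hlam (sq_nonneg s),
    mul_le_mul_of_nonneg_right hδ (sq_nonneg s)]

lemma re_quadForm_le {A : ι → ι → ℂ} {i₀ : ι} {lam c β δ : ℝ} (hc : 0 < c) (hβ : 0 ≤ β)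
    (hδ : 0 ≤ δ) (hA : ∀ j n, A j n = starRingEnd ℂ (A n j)) (hi₀ : A i₀ i₀ = lam)
    (hdiag : ∀ j, j ≠ i₀ → (A j j).re ≤ -c) (hcross : ∀ j, j ≠ i₀ → ‖A j i₀‖ ≤ β)
    (hoff : ∀ j n, j ≠ i₀ → n ≠ i₀ → j ≠ n → ‖A j n‖ ≤ δ) (hlam : -(c / 4) ≤ lam)
    (hsmall : Fintype.card ι ^ 2 * δ ≤ c / 4) {z : ι → ℂ} (hz : ∑ j, ‖z j‖ ^ 2 = 1) :
    (quadForm A z).re ≤ lam + (Fintype.card ι ^ 2 * β) ^ 2 / (2 * c) := by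
  set t := 1 - ‖z i₀‖ ^ 2
  have ht : 0 ≤ t := sub_nonneg.2 (norm_sq_le_one_of_sum_norm_sq_eq_one hz i₀)
  calc (quadForm A z).re ≤ ∑ j, (A j j).re * ‖z j‖ ^ 2 + Fintype.card ι ^ 2 * (β * √t + δ * t) :=
        re_quadForm_le_sum_diag_add (by positivity) fun j n hjn =>
          norm_mul_norm_mul_norm_le hz hβ hδ hA hcross hoff hjn
    _ ≤ lam * (1 - t) - c * t + Fintype.card ι ^ 2 * (β * √t + δ * t) := by
        gcongr
        simpa only [hi₀, Complex.ofReal_re, t, sub_sub_cancel] using sum_re_diag_mul_le hz hdiag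
    _ ≤ lam + (Fintype.card ι ^ 2 * β) ^ 2 / (2 * c) := sub_mul_add_mul_sqrt_le hc ht hlam hsmall

lemma quadForm_single [DecidableEq ι] (A : ι → ι → ℂ) (i₀ : ι) :
    quadForm A (Pi.single i₀ 1) = A i₀ i₀ := by
  simp [quadForm, Pi.single_apply]

lemma abs_sSup_quadFormSphereValues_sub_le {A : ι → ι → ℂ} {i₀ : ι} {lam c β δ : ℝ} (hc : 0 < c)
    (hβ : 0 ≤ β) (hδ : 0 ≤ δ) (hA : ∀ j n, A j n = starRingEnd ℂ (A n j)) (hi₀ : A i₀ i₀ = lam)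
    (hdiag : ∀ j, j ≠ i₀ → (A j j).re ≤ -c) (hcross : ∀ j, j ≠ i₀ → ‖A j i₀‖ ≤ β)
    (hoff : ∀ j n, j ≠ i₀ → n ≠ i₀ → j ≠ n → ‖A j n‖ ≤ δ) (hlam : -(c / 4) ≤ lam)
    (hsmall : Fintype.card ι ^ 2 * δ ≤ c / 4) :
    |sSup (quadFormSphereValues A) - lam| ≤ (Fintype.card ι ^ 2 * β) ^ 2 / (2 * c) := by
  classical
  have hmem : lam ∈ quadFormSphereValues A :=
    ⟨Pi.single i₀ 1, by rw [Fintype.sum_eq_single i₀ fun j hj => by simp [hj]]; simp,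
      by rw [quadForm_single, hi₀, Complex.ofReal_re]⟩
  have hub : ∀ x ∈ quadFormSphereValues A, x ≤ lam + (Fintype.card ι ^ 2 * β) ^ 2 / (2 * c) := by
    rintro x ⟨z, hz, rfl⟩
    exact re_quadForm_le hc hβ hδ hA hi₀ hdiag hcross hoff hlam hsmall hz
  rw [abs_of_nonneg (sub_nonneg.2 (le_csSup ⟨_, hub⟩ hmem))]
  linarith [csSup_le ⟨_, hmem⟩ hub]

end QuadraticForm

section Asymptotics

variable {α ι : Type*} {l : Filter α}

lemma exists_pos_eventually_forall_norm_le [Fintype ι] {E : Type*} [NormedAddCommGroup E]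
    {f : ι → α → E} {g : α → ℝ} (h : ∀ i, f i =O[l] g) :
    ∃ C > 0, ∀ᶠ x in l, ∀ i, ‖f i x‖ ≤ C * ‖g x‖ := by
  obtain ⟨C, hC, hCg⟩ := (isBigO_pi.2 h : (fun x i => f i x) =O[l] g).exists_pos
  exact ⟨C, hC, hCg.bound.mono fun x hx i => (norm_le_pi_norm (fun i => f i x) i).trans hx⟩

lemma exists_pos_eventually_forall_re_le_neg [Finite ι] {f : ι → α → ℂ} {m : ι → ℝ}
    (hm : ∀ i, m i < 0) (hf : ∀ i, Tendsto (f i) l (𝓝 (m i))) :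
    ∃ c > 0, ∀ᶠ x in l, ∀ i, (f i x).re ≤ -c := by
  obtain ⟨c, hcm, hc⟩ : ∃ c, (∀ i, c < -m i) ∧ 0 < c :=
    ((eventually_all.2 fun i => eventually_nhdsWithin_of_eventually_nhds
      (eventually_lt_nhds (neg_pos.2 (hm i)))).and self_mem_nhdsWithin).exists (f := 𝓝[>] 0)
  refine ⟨c, hc, eventually_all.2 fun i => ?_⟩
  have hre : Tendsto (fun x => (f i x).re) l (𝓝 (m i)) :=
    (Complex.continuous_re.tendsto _).comp (hf i)
  exact (hre.eventually (gt_mem_nhds (by linarith [hcm i]))).mono fun x hx => hx.le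

lemma sSup_quadFormSphereValues_sub_isBigO [Fintype ι] {A : α → ι → ι → ℂ} {i₀ : ι}
    {lam β δ : α → ℝ} {m : ι → ℝ} (hA : ∀ x j n, A x j n = starRingEnd ℂ (A x n j))
    (hi₀ : ∀ x, A x i₀ i₀ = lam x) (hm : ∀ j, j ≠ i₀ → m j < 0)
    (hdiag : ∀ j, j ≠ i₀ → Tendsto (fun x => A x j j) l (𝓝 (m j)))
    (hcross : ∀ j, j ≠ i₀ → (fun x => A x j i₀) =O[l] β)
    (hoff : ∀ j n, j ≠ i₀ → n ≠ i₀ → j ≠ n → (fun x => A x j n) =O[l] δ)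
    (hlam : Tendsto lam l (𝓝 0)) (hδ : Tendsto δ l (𝓝 0)) :
    (fun x => sSup (quadFormSphereValues (A x)) - lam x) =O[l] fun x => β x ^ 2 := by
  classical
  obtain ⟨c, hc, hdiag'⟩ := exists_pos_eventually_forall_re_le_neg
    (fun j : {j // j ≠ i₀} => hm j j.2) fun j => hdiag j j.2
  obtain ⟨C₁, hC₁, hcross'⟩ := exists_pos_eventually_forall_norm_le
    fun j : {j // j ≠ i₀} => hcross j j.2
  obtain ⟨C₂, hC₂, hoff'⟩ := exists_pos_eventually_forall_norm_le
    fun p : {p : ι × ι // p.1 ≠ i₀ ∧ p.2 ≠ i₀ ∧ p.1 ≠ p.2} => hoff _ _ p.2.1 p.2.2.1 p.2.2.2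
  refine .of_bound ((Fintype.card ι ^ 2 * C₁) ^ 2 / (2 * c)) ?_
  filter_upwards [hdiag', hcross', hoff',
    hlam.eventually (lt_mem_nhds (by linarith : -(c / 4) < 0)),
    (hδ.norm.const_mul (Fintype.card ι ^ 2 * C₂)).eventually
      (gt_mem_nhds (show Fintype.card ι ^ 2 * C₂ * ‖(0 : ℝ)‖ < c / 4 by simpa using hc))]
    with x hdx hcx hox hlx hδx
  calc ‖sSup (quadFormSphereValues (A x)) - lam x‖
      ≤ (Fintype.card ι ^ 2 * (C₁ * ‖β x‖)) ^ 2 / (2 * c) :=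
        abs_sSup_quadFormSphereValues_sub_le hc (by positivity) (by positivity) (hA x) (hi₀ x)
          (fun j hj => hdx ⟨j, hj⟩) (fun j hj => hcx ⟨j, hj⟩)
          (fun j n hj hn hjn => hox ⟨(j, n), hj, hn, hjn⟩) hlx.le (by linarith)
    _ = (Fintype.card ι ^ 2 * C₁) ^ 2 / (2 * c) * ‖β x ^ 2‖ := by
        rw [norm_pow]; ring

end Asymptotics

theorem max_hermitian_quadratic_form_asymptotics_general
    (N : ℕ) (γ : ℝ) (hγ : 0 < γ)
    (M : EuclideanSpace ℝ (Fin 2) → Fin (N+1) → Fin (N+1) → ℂ)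
    (σ μ : EuclideanSpace ℝ (Fin 2) → ℝ) (Mlim : Fin (N+1) → ℝ)
    (hherm : ∀ a j n, M a j n = (starRingEnd ℂ) (M a n j))
    (hσ0 : ∀ a, 0 ≤ σ a)
    (hσO : σ =O[𝓝[≠] (0 : EuclideanSpace ℝ (Fin 2))] fun a => ‖a‖ ^ (2*γ))
    (hμO : μ =O[𝓝[≠] (0 : EuclideanSpace ℝ (Fin 2))] fun _ => (1:ℝ))
    (hlast : ∀ a, M a (Fin.last N) (Fin.last N) = ((σ a * μ a : ℝ) : ℂ))
    (hdiag : ∀ j : Fin (N+1), j ≠ Fin.last N → Mlim j < 0 ∧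
      Tendsto (fun a => M a j j) (𝓝[≠] (0 : EuclideanSpace ℝ (Fin 2)))
        (𝓝 ((Mlim j : ℝ) : ℂ)))
    (hcross : ∀ j : Fin (N+1), j ≠ Fin.last N →
      (fun a => M a j (Fin.last N)) =O[𝓝[≠] (0 : EuclideanSpace ℝ (Fin 2))]
        fun a => ‖a‖ ^ γ * Real.sqrt (σ a))
    (hoff : ∀ j n : Fin (N+1), j ≠ Fin.last N → n ≠ Fin.last N → j ≠ n →
      (fun a => M a j n) =O[𝓝[≠] (0 : EuclideanSpace ℝ (Fin 2))]
        fun a => ‖a‖ ^ (2*γ)) :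
    (fun a => sSup {x : ℝ | ∃ z : Fin (N+1) → ℂ, (∑ j, ‖z j‖^2) = 1 ∧
        x = (∑ j, ∑ n, M a j n * z j * (starRingEnd ℂ) (z n)).re}
      - σ a * μ a)
      =o[𝓝[≠] (0 : EuclideanSpace ℝ (Fin 2))] σ := by
  set l := 𝓝[≠] (0 : EuclideanSpace ℝ (Fin 2))
  have hr : Tendsto (fun a : EuclideanSpace ℝ (Fin 2) => ‖a‖ ^ (2 * γ)) l (𝓝 0) := by
    simpa [Real.zero_rpow (by positivity : 2 * γ ≠ 0)] using
      (tendsto_norm_zero.mono_left nhdsWithin_le_nhds : Tendsto (‖·‖) l _).rpow_const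
        (p := 2 * γ) (Or.inr (by positivity))
  have hσμ : Tendsto (fun a => σ a * μ a) l (𝓝 0) :=
    ((isBigO_refl σ l).mul hμO).trans_tendsto (by simpa using hσO.trans_tendsto hr)
  have hsq : ∀ a, (‖a‖ ^ γ * √(σ a)) ^ 2 = ‖a‖ ^ (2 * γ) * σ a := fun a => by
    rw [mul_pow, Real.sq_sqrt (hσ0 a), mul_comm 2 γ, Real.rpow_mul (norm_nonneg a), Real.rpow_two]
  have hlo : (fun a => (‖a‖ ^ γ * √(σ a)) ^ 2) =o[l] σ := by
    simpa [hsq] using ((isLittleO_one_iff ℝ).2 hr).mul_isBigO (isBigO_refl σ l)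
  exact (sSup_quadFormSphereValues_sub_isBigO hherm hlast (fun j hj => (hdiag j hj).1)
    (fun j hj => (hdiag j hj).2) hcross hoff hσμ hr).trans_isLittleO hlo

/-- Abstract lemma on the maximum of Hermitian quadratic forms depending on a pole `a → 0`
(Lemma 4.1). Here `n₀ = N + 1`, the distinguished index is `Fin.last N`. -/
theorem max_hermitian_quadratic_form_asymptotics
    (N : ℕ) (γ : ℝ) (hγ : 0 < γ)
    (M : EuclideanSpace ℝ (Fin 2) → Fin (N+1) → Fin (N+1) → ℂ)
    (σ μ : EuclideanSpace ℝ (Fin 2) → ℝ) (Mlim : Fin (N+1) → ℝ)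
    (hherm : ∀ a j n, M a j n = (starRingEnd ℂ) (M a n j))
    (hσ0 : ∀ a, 0 ≤ σ a)
    (hσO : σ =O[𝓝[≠] (0 : EuclideanSpace ℝ (Fin 2))] fun a => ‖a‖ ^ (2*γ))
    (hμO : μ =O[𝓝[≠] (0 : EuclideanSpace ℝ (Fin 2))] fun _ => (1:ℝ))
    (hlast : ∀ a, M a (Fin.last N) (Fin.last N) = ((σ a * μ a : ℝ) : ℂ))
    (hdiag : ∀ j : Fin (N+1), j ≠ Fin.last N → Mlim j < 0 ∧
      Tendsto (fun a => M a j j) (𝓝[≠] (0 : EuclideanSpace ℝ (Fin 2)))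
        (𝓝 ((Mlim j : ℝ) : ℂ)))
    (hcross : ∀ j : Fin (N+1), j ≠ Fin.last N →
      (fun a => M a j (Fin.last N)) =O[𝓝[≠] (0 : EuclideanSpace ℝ (Fin 2))]
        fun a => ‖a‖ ^ γ * Real.sqrt (σ a))
    (hoff : ∀ j n : Fin (N+1), j ≠ Fin.last N → n ≠ Fin.last N → j ≠ n →
      (fun a => M a j n) =O[𝓝[≠] (0 : EuclideanSpace ℝ (Fin 2))]
        fun a => ‖a‖ ^ (2*γ))
    (hhigher : ∃ Mnat : ℕ,
      (fun a => ‖a‖ ^ ((2 + (Mnat:ℝ)) * γ)) =o[𝓝[≠] (0 : EuclideanSpace ℝ (Fin 2))] σ) :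
    (fun a => sSup {x : ℝ | ∃ z : Fin (N+1) → ℂ, (∑ j, ‖z j‖^2) = 1 ∧
        x = (∑ j, ∑ n, M a j n * z j * (starRingEnd ℂ) (z n)).re}
      - σ a * μ a)
      =o[𝓝[≠] (0 : EuclideanSpace ℝ (Fin 2))] σ :=
  max_hermitian_quadratic_form_asymptotics_general N γ hγ M σ μ Mlim hherm hσ0 hσO hμO hlast hdiag
    hcross hoff
end

section
/- For r > 0, a disk D_r(a) ⊂ ℝ², and u ∈ H¹ on D_r with u/|x - a| ∈ L², with a ∈ D_r := D_r(0), the Poincaré-type inequality (1/r²) ∫_{D_r} |u|² dx ≤ (1/r) ∫_{∂D_r} |u|² ds + ∫_{D_r} |(i∇ + A_a)u|² dx holds, where A_a(x) = α(-(x₂-a₂), (x₁-a₁))/|x-a|² with α ∈ (0,1) \ {1/2}. -/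
open MeasureTheory Real Set

noncomputable section

/-- Points of the plane. -/
abbrev Pl := EuclideanSpace ℝ (Fin 2)

/-- The Aharonov–Bohm vector potential with pole `a` and circulation `α`:
`A_a(x) = α (-(x₂-a₂), x₁-a₁)/|x-a|²`. -/
def ABpot (α : ℝ) (a : Pl) (x : Pl) : Fin 2 → ℝ :=
  fun j => (α / ‖x - a‖^2) * (if j = 0 then -((x - a) 1) else (x - a) 0)

/-- The magnetic gradient `(i∇ + A_a)u`, componentwise. -/
def magGrad (α : ℝ) (a : Pl) (u : Pl → ℂ) (x : Pl) : Fin 2 → ℂ :=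
  fun j => Complex.I * fderiv ℝ u x (EuclideanSpace.single j 1) + (ABpot α a x j : ℂ) * u x

/-- The pointwise squared norm `|(i∇ + A_a)u|²`. -/
def magSq (α : ℝ) (a : Pl) (u : Pl → ℂ) (x : Pl) : ℝ :=
  ∑ j, ‖magGrad α a u x j‖^2

/-- Point on the circle of radius `r` centered at the origin at angle `t`. -/
def circPt (r t : ℝ) : Pl :=
  (WithLp.equiv 2 (Fin 2 → ℝ)).symm ![r * Real.cos t, r * Real.sin t]

def iso : (ℝ × ℝ) ≃ᵐ Pl :=
  (MeasurableEquiv.finTwoArrow).symm.trans (MeasurableEquiv.toLp 2 (Fin 2 → ℝ))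

lemma iso_pres : MeasurePreserving iso := by
  exact ((EuclideanSpace.volume_preserving_symm_measurableEquiv_toLp (Fin 2)).symm _).comp
    ((volume_preserving_finTwoArrow ℝ).symm _)

lemma iso_apply (p : ℝ × ℝ) : iso p = (WithLp.equiv 2 (Fin 2 → ℝ)).symm ![p.1, p.2] := by
  rfl

lemma iso_polar (p : ℝ × ℝ) : iso (polarCoord.symm p) = circPt p.1 p.2 := by
  rw [iso_apply, polarCoord_symm_apply]
  rfl

lemma norm_iso (p : ℝ × ℝ) : ‖iso p‖ = Real.sqrt (p.1^2 + p.2^2) := by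
  rw [iso_apply, EuclideanSpace.norm_eq]
  norm_num [Fin.sum_univ_two]

lemma continuous_iso : Continuous iso := by
  have : ⇑iso = fun p : ℝ × ℝ => (WithLp.equiv 2 (Fin 2 → ℝ)).symm ![p.1, p.2] := funext iso_apply
  rw [this]
  refine Continuous.comp ?_ ?_
  · exact (EuclideanSpace.equiv (Fin 2) ℝ).symm.continuous
  · refine continuous_pi fun i => ?_
    fin_cases i <;> simp <;> continuity

lemma continuous_circPt : Continuous (fun p : ℝ × ℝ => circPt p.1 p.2) := by
  have : (fun p : ℝ × ℝ => circPt p.1 p.2)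
      = iso ∘ (fun p : ℝ × ℝ => (p.1 * Real.cos p.2, p.1 * Real.sin p.2)) := by
    funext p; rw [Function.comp_apply, iso_apply]; rfl
  rw [this]
  exact continuous_iso.comp (by fun_prop)

lemma circPt_smul (t θ : ℝ) : circPt t θ = t • circPt 1 θ := by
  show _ = t • ((WithLp.equiv 2 (Fin 2 → ℝ)).symm ![1 * Real.cos θ, 1 * Real.sin θ])
  ext i
  fin_cases i <;>
    · show _ = t * _
      norm_num [circPt, PiLp.smul_apply, smul_eq_mul]

lemma hasDerivAt_circPt (θ t : ℝ) : HasDerivAt (fun s => circPt s θ) (circPt 1 θ) t := by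
  have : (fun s => circPt s θ) = fun s : ℝ => s • circPt 1 θ := funext fun s => circPt_smul s θ
  rw [this]
  simpa using (hasDerivAt_id t).smul_const (circPt 1 θ)

lemma norm_circPt (t θ : ℝ) (ht : 0 ≤ t) : ‖circPt t θ‖ = t := by
  have := norm_iso (t * Real.cos θ, t * Real.sin θ)
  rw [iso_apply] at this
  have h2 : circPt t θ = (WithLp.equiv 2 (Fin 2 → ℝ)).symm ![t * Real.cos θ, t * Real.sin θ] := rfl
  rw [h2]
  rw [show ((t * Real.cos θ, t * Real.sin θ) : ℝ × ℝ).1 = t * Real.cos θ from rfl] at this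
  rw [this]
  have : (t * Real.cos θ)^2 + (t * Real.sin θ)^2 = t^2 := by
    have := Real.sin_sq_add_cos_sq θ; nlinarith
  rw [this, Real.sqrt_sq ht]

lemma continuous_coordPl (j : Fin 2) : Continuous (fun x : Pl => x j) :=
  (continuous_apply j).comp (EuclideanSpace.equiv (Fin 2) ℝ).continuous

lemma continuous_magSq {α : ℝ} {a : Pl} {u : Pl → ℂ} (hu : ContDiff ℝ (⊤ : ℕ∞) u)
    {ε : ℝ} (hε : 0 < ε) (hvan : ∀ x ∈ Metric.ball a ε, u x = 0) :
    Continuous (magSq α a u) := by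
  have hfd : Continuous (fderiv ℝ u) := (hu.fderiv_right (m := 0) (by simp)).continuous
  have hcu : Continuous u := hu.continuous
  have hzero : ∀ x ∈ Metric.ball a ε, ∀ j, magGrad α a u x j = 0 := by
    intro x hx j
    have hev : u =ᶠ[nhds x] (fun _ => (0:ℂ)) := by
      filter_upwards [Metric.isOpen_ball.mem_nhds hx] with y hy using hvan y hy
    have hfz : fderiv ℝ u x = 0 := by
      rw [Filter.EventuallyEq.fderiv_eq hev, fderiv_fun_const]; rfl
    simp [magGrad, hfz, hvan x hx]
  have hmg : ∀ j, Continuous (fun y => magGrad α a u y j) := by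
    intro j
    rw [continuous_iff_continuousAt]
    intro x
    rcases em (x ∈ Metric.ball a ε) with hx | hx
    · exact ContinuousAt.congr (continuousAt_const)
        (by filter_upwards [Metric.isOpen_ball.mem_nhds hx] with y hy using (hzero y hy j).symm)
    · have hxa : x ≠ a := by rintro rfl; exact hx (Metric.mem_ball_self hε)
      have hne : ‖x - a‖^2 ≠ 0 := by
        simpa [sub_eq_zero] using pow_ne_zero 2 (norm_ne_zero_iff.2 (sub_ne_zero.2 hxa))
      have hsub : Continuous (fun y : Pl => y - a) := continuous_id.sub continuous_const
      have hnorm : ContinuousAt (fun y : Pl => ‖y - a‖^2) x := ((hsub.norm.pow 2)).continuousAt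
      have hAB : ContinuousAt (fun y => ABpot α a y j) x := by
        refine ContinuousAt.mul ((continuousAt_const.div hnorm hne)) ?_
        have h1 : ContinuousAt (fun y : Pl => (y - a) 1) x :=
          ((continuous_coordPl 1).comp hsub).continuousAt
        have h0 : ContinuousAt (fun y : Pl => (y - a) 0) x :=
          ((continuous_coordPl 0).comp hsub).continuousAt
        rcases em (j = 0) with h | h
        · simp only [ABpot, h, if_true]; exact h1.neg
        · simpa only [ABpot, h, if_false] using h0
      refine (continuousAt_const.mul ?_).add
        (((Complex.continuous_ofReal.continuousAt.comp hAB)).mul hcu.continuousAt)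
      exact (hfd.clm_apply continuous_const).continuousAt
  exact continuous_finset_sum _ fun j _ => ((hmg j).norm.pow 2)

lemma oneD {r : ℝ} (hr : 0 < r) (F F' G : ℝ → ℝ)
    (hF : ∀ t, HasDerivAt F (F' t) t)
    (hG : Continuous G) (hGnn : ∀ t, 0 ≤ G t) (hFnn : ∀ t, 0 ≤ F t)
    (hbound : ∀ t, (F' t)^2 ≤ 4 * F t * G t) :
    ∫ t in (0:ℝ)..r, t * F t ≤ r^2 * F r + r^2 * ∫ t in (0:ℝ)..r, t * G t := by
  have hFc : Continuous F := by
    rw [continuous_iff_continuousAt]; exact fun t => (hF t).differentiableAt.continuousAt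
  set φ : ℝ → ℝ := fun s => G s * s * r^2 / 2 - F s * s / 2 with hφ
  have hφc : Continuous φ := by fun_prop
  set W : ℝ → ℝ := fun t => F t * t^2 / 2 + ∫ s in (0:ℝ)..t, φ s with hW
  have hWd : ∀ t, HasDerivAt W (F' t * t^2 / 2 + F t * t + φ t) t := by
    intro t
    have h1 : HasDerivAt (fun t => F t * t^2 / 2) (F' t * t^2 / 2 + F t * t) t := by
      have := ((hF t).mul ((hasDerivAt_id t).pow 2)).div_const 2
      convert this using 1
      · rfl
      · rfl
      · funext x; simp [Pi.mul_apply]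
      · simp only [id_eq, Pi.pow_apply]
        norm_num
        ring
    have h2 : HasDerivAt (fun t => ∫ s in (0:ℝ)..t, φ s) (φ t) t := by
      refine intervalIntegral.integral_hasDerivAt_right (hφc.intervalIntegrable _ _)
        ?_ hφc.continuousAt
      exact hφc.stronglyMeasurable.stronglyMeasurableAtFilter
    exact h1.add h2
  have hmono : W 0 ≤ W r := by
    have : MonotoneOn W (Icc 0 r) := by
      refine monotoneOn_of_deriv_nonneg (convex_Icc 0 r)
        (fun t ht => ((hWd t).differentiableAt.continuousAt.continuousWithinAt)) ?_ ?_
      · intro t ht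
        exact ((hWd t).differentiableAt.differentiableWithinAt)
      · intro t ht
        rw [interior_Icc] at ht
        rw [(hWd t).deriv]
        have h1 : 0 < t := ht.1
        have h2 : t < r := ht.2
        have hb := hbound t
        have hF0 := hFnn t
        have hG0 := hGnn t
        rcases le_or_gt 0 (F' t) with h | h
        · have : 0 ≤ φ t + F t * t / 2 := by
            simp only [hφ]
            have : 0 ≤ G t * t * r^2 / 2 := by positivity
            linarith
          nlinarith
        · -- F' < 0 : need F' t * t^2/2 + F t * t/2 + G t * t * r^2/2 ≥ 0
          simp only [hφ]
          have key : -(F' t) * t^2 ≤ F t * t + G t * t * r^2 := by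
            have hA : (0:ℝ) ≤ (F t * t - G t * t * r^2)^2 := sq_nonneg _
            have hB : (F' t)^2 * t^4 ≤ 4 * F t * G t * t^4 :=
              mul_le_mul_of_nonneg_right hb (by positivity)
            have hC : 4 * F t * G t * t^4 ≤ 4 * F t * G t * (t^2 * r^2) := by
              have ht2 : t^2 ≤ r^2 := by nlinarith
              have : (0:ℝ) ≤ 4 * F t * G t := by positivity
              nlinarith [mul_le_mul_of_nonneg_left ht2 (mul_nonneg this (sq_nonneg t))]
            have hsq : ((-(F' t)) * t^2)^2 ≤ (F t * t + G t * t * r^2)^2 := by nlinarith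
            have hL : 0 ≤ (-(F' t)) * t^2 := mul_nonneg (neg_nonneg.2 h.le) (sq_nonneg t)
            have hR : 0 ≤ F t * t + G t * t * r^2 := by positivity
            nlinarith [hsq, hL, hR, sq_nonneg ((-(F' t)) * t^2 + (F t * t + G t * t * r^2))]
          nlinarith
    exact this (left_mem_Icc.2 hr.le) (right_mem_Icc.2 hr.le) hr.le
  have hW0 : W 0 = 0 := by simp [hW]
  rw [hW0] at hmono
  simp only [hW, hφ] at hmono
  have e1 : ∫ s in (0:ℝ)..r, G s * s * r^2/2 = (r^2/2) * ∫ s in (0:ℝ)..r, s * G s := by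
    rw [← intervalIntegral.integral_const_mul]
    exact intervalIntegral.integral_congr fun s _ => by ring
  have e2 : ∫ s in (0:ℝ)..r, F s * s / 2 = (1/2) * ∫ s in (0:ℝ)..r, s * F s := by
    rw [← intervalIntegral.integral_const_mul]
    exact intervalIntegral.integral_congr fun s _ => by ring
  have hsplit : ∫ s in (0:ℝ)..r, (G s * s * r^2 / 2 - F s * s / 2)
      = (r^2/2) * (∫ s in (0:ℝ)..r, s * G s) - (1/2) * ∫ s in (0:ℝ)..r, s * F s := by
    rw [intervalIntegral.integral_sub
      (Continuous.intervalIntegrable (by fun_prop) 0 r)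
      (Continuous.intervalIntegrable (by fun_prop) 0 r), e1, e2]
  rw [hsplit] at hmono
  linarith [hmono]

set_option maxHeartbeats 1000000 in
lemma realCS (wr wi a0 b0 a1 b1 s0 s1 e0 e1 A0 B0 A1 B1 : ℝ)
    (he : e0^2 + e1^2 = 1)
    (hA0 : A0 = -b0 + s0*wr) (hB0 : B0 = a0 + s0*wi)
    (hA1 : A1 = -b1 + s1*wr) (hB1 : B1 = a1 + s1*wi) :
    (2*(wr*(e0*a0 + e1*a1) + wi*(e0*b0 + e1*b1)))^2
      ≤ 4*(wr^2 + wi^2)*(A0^2 + B0^2 + A1^2 + B1^2) := by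
  subst hA0 hB0 hA1 hB1
  set p0 := wr * a0 + wi * b0 with hp0
  set p1 := wr * a1 + wi * b1 with hp1
  set q0 := wr * b0 - wi * a0 with hq0
  set q1 := wr * b1 - wi * a1 with hq1
  have hT : (e0 * p0 + e1 * p1)^2 ≤ p0^2 + p1^2 := by
    nlinarith [sq_nonneg (e0*p1 - e1*p0)]
  have i0 : (wr^2 + wi^2) * ((-b0 + s0*wr)^2 + (a0 + s0*wi)^2)
      = p0^2 + (q0 - s0*(wr^2+wi^2))^2 := by rw [hp0, hq0]; ring
  have i1 : (wr^2 + wi^2) * ((-b1 + s1*wr)^2 + (a1 + s1*wi)^2)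
      = p1^2 + (q1 - s1*(wr^2+wi^2))^2 := by rw [hp1, hq1]; ring
  have hgoal : (2*(wr*(e0*a0 + e1*a1) + wi*(e0*b0 + e1*b1)))^2 = 4*(e0*p0 + e1*p1)^2 := by
    rw [hp0, hp1]; ring
  rw [hgoal]
  have h2 : p0^2 + p1^2 ≤ (wr^2 + wi^2) * ((-b0 + s0*wr)^2 + (a0 + s0*wi)^2)
      + (wr^2 + wi^2) * ((-b1 + s1*wr)^2 + (a1 + s1*wi)^2) := by
    rw [i0, i1]
    nlinarith [sq_nonneg (q0 - s0*(wr^2+wi^2)), sq_nonneg (q1 - s1*(wr^2+wi^2))]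
  linarith [hT, h2]

set_option maxHeartbeats 1000000 in
lemma keyCS (w d0 d1 m0 m1 : ℂ) (s0 s1 e0 e1 : ℝ) (he : e0^2 + e1^2 = 1)
    (h0 : m0 = Complex.I * d0 + (s0:ℂ) * w) (h1 : m1 = Complex.I * d1 + (s1:ℂ) * w) :
    (2*(w.re * ((e0:ℂ)*d0 + (e1:ℂ)*d1).re + w.im * ((e0:ℂ)*d0 + (e1:ℂ)*d1).im))^2
      ≤ 4 * Complex.normSq w * (‖m0‖^2 + ‖m1‖^2) := by
  rw [Complex.ext_iff] at h0 h1
  obtain ⟨h0r, h0i⟩ := h0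
  obtain ⟨h1r, h1i⟩ := h1
  simp only [Complex.add_re, Complex.add_im, Complex.mul_re, Complex.mul_im,
    Complex.I_re, Complex.I_im, Complex.ofReal_re, Complex.ofReal_im,
    Complex.sq_norm, Complex.normSq_apply] at *
  have key := realCS w.re w.im d0.re d0.im d1.re d1.im s0 s1 e0 e1 m0.re m0.im m1.re m1.im he
    (by rw [h0r]; ring) (by rw [h0i]; ring) (by rw [h1r]; ring) (by rw [h1i]; ring)
  linarith [key]

lemma circPt_one_decomp (θ : ℝ) : circPt 1 θ =
    Real.cos θ • EuclideanSpace.single (0 : Fin 2) (1:ℝ)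
      + Real.sin θ • EuclideanSpace.single (1 : Fin 2) (1:ℝ) := by
  ext i
  fin_cases i <;>
    norm_num [circPt, EuclideanSpace.single_apply, PiLp.smul_apply, PiLp.add_apply,
      smul_eq_mul]

lemma perTheta {α : ℝ} {a : Pl} {u : Pl → ℂ} (hu : ContDiff ℝ (⊤ : ℕ∞) u) (θ : ℝ) :
    ∃ F' : ℝ → ℝ, (∀ t, HasDerivAt (fun s => ‖u (circPt s θ)‖^2) (F' t) t) ∧
      ∀ t, (F' t)^2 ≤ 4 * ‖u (circPt t θ)‖^2 * magSq α a u (circPt t θ) := by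
  have hud : Differentiable ℝ u := hu.differentiable (by simp)
  set v : ℝ → ℂ := fun t => fderiv ℝ u (circPt t θ) (circPt 1 θ) with hv
  set w : ℝ → ℂ := fun t => u (circPt t θ) with hwdef
  refine ⟨fun t => 2 * ((w t).re * (v t).re + (w t).im * (v t).im), ?_, ?_⟩
  · intro t
    have hw : HasDerivAt w (v t) t :=
      (hud (circPt t θ)).hasFDerivAt.comp_hasDerivAt t (hasDerivAt_circPt θ t)
    have hre : HasDerivAt (fun s => (w s).re) ((v t).re) t := by
      exact (Complex.reCLM.hasFDerivAt.comp_hasDerivAt t hw)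
    have him : HasDerivAt (fun s => (w s).im) ((v t).im) t := by
      exact (Complex.imCLM.hasFDerivAt.comp_hasDerivAt t hw)
    have hder : HasDerivAt (fun s => (w s).re^2 + (w s).im^2)
        (2 * (w t).re^1 * (v t).re + 2 * (w t).im^1 * (v t).im) t :=
      (hre.pow 2).add (him.pow 2)
    have heq : (fun s => ‖u (circPt s θ)‖^2) = fun s => (w s).re^2 + (w s).im^2 := by
      funext s
      simp only [hwdef]
      rw [Complex.sq_norm, Complex.normSq_apply]
      ring
    rw [heq]
    convert hder using 1
    ring
  · intro t
    set x := circPt t θ with hx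
    have hvdec : v t = ((Real.cos θ):ℂ) * fderiv ℝ u x (EuclideanSpace.single 0 1)
        + ((Real.sin θ):ℂ) * fderiv ℝ u x (EuclideanSpace.single 1 1) := by
      simp only [hv]
      rw [circPt_one_decomp θ, map_add, _root_.map_smul, _root_.map_smul, Complex.real_smul,
        Complex.real_smul]
    have hkey := keyCS (w t) (fderiv ℝ u x (EuclideanSpace.single 0 1))
      (fderiv ℝ u x (EuclideanSpace.single 1 1))
      (magGrad α a u x 0) (magGrad α a u x 1)
      (ABpot α a x 0) (ABpot α a x 1) (Real.cos θ) (Real.sin θ)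
      (Real.cos_sq_add_sin_sq θ) rfl rfl
    have h1 : ‖u x‖^2 = Complex.normSq (w t) := by
      rw [Complex.sq_norm]
    have h2 : magSq α a u x = ‖magGrad α a u x 0‖^2 + ‖magGrad α a u x 1‖^2 := by
      rw [magSq, Fin.sum_univ_two]
    show (2 * ((w t).re * (v t).re + (w t).im * (v t).im))^2
      ≤ 4 * ‖u x‖^2 * magSq α a u x
    rw [h1, h2, hvdec]
    exact hkey

lemma circPt_periodic (t θ : ℝ) : circPt t (θ + 2*π) = circPt t θ := by
  simp [circPt, Real.cos_add_two_pi, Real.sin_add_two_pi]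

lemma polar_ball {r : ℝ} (hr : 0 < r) (h : Pl → ℝ) (hh : Continuous h) :
    ∫ x in Metric.ball (0:Pl) r, h x
      = ∫ θ in (0:ℝ)..(2*π), ∫ t in (0:ℝ)..r, t * h (circPt t θ) := by
  set S : Set (ℝ × ℝ) := iso ⁻¹' (Metric.ball (0:Pl) r) with hSdef
  have hS : MeasurableSet S := iso.measurable Metric.isOpen_ball.measurableSet
  set f : ℝ × ℝ → ℝ := fun q => q.1 * h (circPt q.1 q.2) with hfdef
  have hfc : Continuous f := continuous_fst.mul (hh.comp continuous_circPt)
  have step1 : ∫ x in Metric.ball (0:Pl) r, h x = ∫ p in S, h (iso p) :=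
    (iso_pres.setIntegral_preimage_emb iso.measurableEmbedding h _).symm
  have step2 : ∫ p in S, h (iso p) = ∫ p : ℝ × ℝ, S.indicator (fun p => h (iso p)) p :=
    (integral_indicator hS).symm
  have step3 : ∫ p : ℝ × ℝ, S.indicator (fun p => h (iso p)) p
      = ∫ p in polarCoord.target, p.1 • S.indicator (fun p => h (iso p)) (polarCoord.symm p) :=
    (integral_comp_polarCoord_symm _).symm
  have step4 : ∫ p in polarCoord.target, p.1 • S.indicator (fun p => h (iso p)) (polarCoord.symm p)
      = ∫ p in polarCoord.target, ({q : ℝ × ℝ | q.1 < r}.indicator f) p := by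
    refine setIntegral_congr_fun polarCoord.open_target.measurableSet (fun p hp => ?_)
    rw [polarCoord_target] at hp
    have hp1 : 0 < p.1 := hp.1
    have hmem : polarCoord.symm p ∈ S ↔ p.1 < r := by
      rw [hSdef, Set.mem_preimage, iso_polar, mem_ball_zero_iff, norm_circPt _ _ hp1.le]
    rcases em (p.1 < r) with hlt | hlt
    · rw [Set.indicator_of_mem (hmem.2 hlt), Set.indicator_of_mem (by exact hlt),
        iso_polar, smul_eq_mul]
    · rw [Set.indicator_of_notMem (fun c => hlt (hmem.1 c)),
        Set.indicator_of_notMem (by exact hlt), smul_zero]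
  have step5 : ∫ p in polarCoord.target, ({q : ℝ × ℝ | q.1 < r}.indicator f) p
      = ∫ p in polarCoord.target ∩ {q : ℝ × ℝ | q.1 < r}, f p :=
    setIntegral_indicator (measurableSet_lt measurable_fst measurable_const)
  have hseteq : polarCoord.target ∩ {q : ℝ × ℝ | q.1 < r} = Ioo 0 r ×ˢ Ioo (-π) π := by
    rw [polarCoord_target]
    ext p
    simp only [Set.mem_inter_iff, Set.mem_prod, mem_Ioi, mem_Ioo, Set.mem_setOf_eq]
    tauto
  have hIcc : IntegrableOn f (Ioo 0 r ×ˢ Ioo (-π) π) := by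
    refine ((hfc.continuousOn).integrableOn_compact (isCompact_Icc.prod isCompact_Icc)).mono_set
      (Set.prod_mono Ioo_subset_Icc_self Ioo_subset_Icc_self)
  have step6 : ∫ p in Ioo 0 r ×ˢ Ioo (-π) π, f p
      = ∫ t in Ioo (0:ℝ) r, ∫ θ in Ioo (-π) π, f (t, θ) := by
    rw [MeasureTheory.Measure.volume_eq_prod] at hIcc ⊢
    exact setIntegral_prod f hIcc
  have step7 : ∫ t in Ioo (0:ℝ) r, ∫ θ in Ioo (-π) π, f (t, θ)
      = ∫ θ in Ioo (-π) π, ∫ t in Ioo (0:ℝ) r, f (t, θ) := by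
    refine MeasureTheory.integral_integral_swap ?_
    rw [Measure.prod_restrict, ← MeasureTheory.Measure.volume_eq_prod]
    exact hIcc
  have inner_eq : ∀ θ, ∫ t in Ioo (0:ℝ) r, f (t, θ) = ∫ t in (0:ℝ)..r, t * h (circPt t θ) := by
    intro θ
    rw [intervalIntegral.integral_of_le hr.le, integral_Ioc_eq_integral_Ioo]
  have outer_eq : ∫ θ in Ioo (-π) π, ∫ t in Ioo (0:ℝ) r, f (t, θ)
      = ∫ θ in (-π)..π, ∫ t in (0:ℝ)..r, t * h (circPt t θ) := by
    rw [intervalIntegral.integral_of_le (by linarith [Real.pi_pos]), integral_Ioc_eq_integral_Ioo]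
    exact setIntegral_congr_fun measurableSet_Ioo (fun θ _ => inner_eq θ)
  have hper : Function.Periodic (fun θ => ∫ t in (0:ℝ)..r, t * h (circPt t θ)) (2*π) := by
    intro θ
    simp only [circPt_periodic]
  have step8 : ∫ θ in (-π)..π, ∫ t in (0:ℝ)..r, t * h (circPt t θ)
      = ∫ θ in (0:ℝ)..(2*π), ∫ t in (0:ℝ)..r, t * h (circPt t θ) := by
    have := hper.intervalIntegral_add_eq (-π) 0
    rw [show -π + 2*π = π by ring, zero_add] at this
    exact this
  rw [step1, step2, step3, step4, step5, hseteq, step6, step7, outer_eq, step8]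

/-- Poincaré-type inequality: for `u ∈ H^{1,a}(D_r, ℂ)` (here a smooth function vanishing
near the pole, these being dense in `H^{1,a}`),
`(1/r²)∫_{D_r}|u|² ≤ (1/r)∫_{∂D_r}|u|² ds + ∫_{D_r}|(i∇+A_a)u|²`,
the boundary integral being written in arc-length parametrization. -/
theorem poincare_type_inequality (α : ℝ) (hα : α ∈ Set.Ioo (0:ℝ) 1) (hα2 : α ≠ 1/2)
    (r : ℝ) (hr : 0 < r) (a : Pl) (ha : a ∈ Metric.ball (0 : Pl) r)
    (u : Pl → ℂ) (hu : ContDiff ℝ (⊤ : ℕ∞) u)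
    (hvan : ∃ ε > (0:ℝ), ∀ x ∈ Metric.ball a ε, u x = 0) :
    (1/r^2) * ∫ x in Metric.ball (0 : Pl) r, ‖u x‖^2 ≤
      (1/r) * (∫ t in (0:ℝ)..(2*π), ‖u (circPt r t)‖^2 * r) +
      ∫ x in Metric.ball (0 : Pl) r, magSq α a u x := by
  obtain ⟨ε, hε, hvan⟩ := hvan
  set f : Pl → ℝ := fun x => ‖u x‖^2 with hfdef
  set g : Pl → ℝ := magSq α a u with hgdef
  have hfc : Continuous f := (hu.continuous.norm).pow 2
  have hgc : Continuous g := continuous_magSq hu hε hvan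
  have hcirc : ∀ θ : ℝ, Continuous (fun t => circPt t θ) := by
    intro θ
    exact continuous_circPt.comp (continuous_id.prodMk continuous_const)
  have hcirc2 : ∀ t : ℝ, Continuous (fun θ => circPt t θ) := by
    intro t
    exact continuous_circPt.comp (continuous_const.prodMk continuous_id)
  -- per-angle inequality
  have perAngle : ∀ θ : ℝ, ∫ t in (0:ℝ)..r, t * f (circPt t θ)
      ≤ r^2 * f (circPt r θ) + r^2 * ∫ t in (0:ℝ)..r, t * g (circPt t θ) := by
    intro θ
    obtain ⟨F', hd, hb⟩ := perTheta (α := α) (a := a) hu θ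
    refine oneD hr (fun t => f (circPt t θ)) F' (fun t => g (circPt t θ)) hd
      (hgc.comp (hcirc θ)) (fun t => ?_) (fun t => sq_nonneg _) (fun t => hb t)
    exact Finset.sum_nonneg fun j _ => sq_nonneg _
  have E1 := polar_ball hr f hfc
  have E2 := polar_ball hr g hgc
  have hbdry : (1/r) * (∫ t in (0:ℝ)..(2*π), ‖u (circPt r t)‖^2 * r)
      = ∫ θ in (0:ℝ)..(2*π), f (circPt r θ) := by
    rw [intervalIntegral.integral_mul_const]
    show (1/r) * ((∫ t in (0:ℝ)..(2*π), ‖u (circPt r t)‖^2) * r) = _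
    rw [mul_comm _ r, ← mul_assoc, one_div, inv_mul_cancel₀ hr.ne', one_mul]
  -- integrability in θ
  have hPf : Continuous (fun θ => ∫ t in (0:ℝ)..r, t * f (circPt t θ)) := by
    refine intervalIntegral.continuous_parametric_intervalIntegral_of_continuous' ?_ 0 r
    exact continuous_snd.mul (hfc.comp (continuous_circPt.comp
      (continuous_snd.prodMk continuous_fst)))
  have hPg : Continuous (fun θ => ∫ t in (0:ℝ)..r, t * g (circPt t θ)) := by
    refine intervalIntegral.continuous_parametric_intervalIntegral_of_continuous' ?_ 0 r
    exact continuous_snd.mul (hgc.comp (continuous_circPt.comp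
      (continuous_snd.prodMk continuous_fst)))
  have hB : Continuous (fun θ => f (circPt r θ)) := hfc.comp (hcirc2 r)
  have main : (1/r^2) * (∫ θ in (0:ℝ)..(2*π), ∫ t in (0:ℝ)..r, t * f (circPt t θ))
      ≤ (∫ θ in (0:ℝ)..(2*π), f (circPt r θ))
        + ∫ θ in (0:ℝ)..(2*π), ∫ t in (0:ℝ)..r, t * g (circPt t θ) := by
    rw [← intervalIntegral.integral_const_mul,
      ← intervalIntegral.integral_add (hB.intervalIntegrable _ _) (hPg.intervalIntegrable _ _)]
    refine intervalIntegral.integral_mono_on (by positivity)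
      ((continuous_const.mul hPf).intervalIntegrable _ _)
      ((hB.add hPg).intervalIntegrable _ _) (fun θ _ => ?_)
    calc (1/r^2) * ∫ t in (0:ℝ)..r, t * f (circPt t θ)
        ≤ (1/r^2) * (r^2 * f (circPt r θ) + r^2 * ∫ t in (0:ℝ)..r, t * g (circPt t θ)) := by
          exact mul_le_mul_of_nonneg_left (perAngle θ) (by positivity)
      _ = f (circPt r θ) + ∫ t in (0:ℝ)..r, t * g (circPt t θ) := by
          field_simp
  rw [E1, E2, hbdry]
  exact main

end
end

section
/- Hardy inequality for Aharonov-Bohm potentials: for every r > 0, a ∈ ℝ², α ∈ (0,1) \ {1/2}, and u ∈ H^{1,a}(D_r(a), ℂ), one has ∫_{D_r(a)} |(i∇ + A_a)u|² dx ≥ (min_{j∈ℤ} |j - α|)² ∫_{D_r(a)} |u(x)|²/|x - a|² dx. -/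
open MeasureTheory Real Set
open Topology Filter AddCircle

noncomputable section

namespace HardyAB

/-! ### Generalities -/

lemma hab2pi : -π < -π + 2*π := by linarith [Real.pi_pos]

/-- the infimum over integers -/
lemma sInf_eq {α : ℝ} (hα : α ∈ Set.Ioo (0:ℝ) 1) :
    sInf {x : ℝ | ∃ j : ℤ, x = |(j:ℝ) - α|} = min α (1 - α) := by
  
  have h0 : (0:ℝ) < α := hα.1
  have h1 : α < 1 := hα.2
  have hmemα : α ∈ {x : ℝ | ∃ j : ℤ, x = |(j:ℝ) - α|} := by
    refine ⟨0, ?_⟩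
    rw [Int.cast_zero, zero_sub, abs_neg, abs_of_pos h0]
  have hmem1 : (1 - α) ∈ {x : ℝ | ∃ j : ℤ, x = |(j:ℝ) - α|} := by
    refine ⟨1, ?_⟩
    rw [Int.cast_one, abs_of_pos (by linarith)]
  have hlb : ∀ b ∈ {x : ℝ | ∃ j : ℤ, x = |(j:ℝ) - α|}, min α (1 - α) ≤ b := by
    rintro b ⟨j, rfl⟩
    rcases le_or_gt (j:ℝ) 0 with hj | hj
    · have : |(j:ℝ) - α| = α - j := by rw [abs_of_nonpos (by linarith)]; ring
      rw [this]
      calc min α (1-α) ≤ α := min_le_left _ _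
        _ ≤ α - j := by linarith
    · have hj1 : (1:ℝ) ≤ (j:ℝ) := by exact_mod_cast hj
      have : |(j:ℝ) - α| = (j:ℝ) - α := abs_of_pos (by linarith)
      rw [this]
      calc min α (1-α) ≤ 1 - α := min_le_right _ _
        _ ≤ (j:ℝ) - α := by linarith
  apply le_antisymm
  · rcases le_total α (1-α) with h | h
    · rw [min_eq_left h]; exact csInf_le ⟨min α (1-α), hlb⟩ hmemα
    · rw [min_eq_right h]; exact csInf_le ⟨min α (1-α), hlb⟩ hmem1
  · exact le_csInf ⟨α, hmemα⟩ hlb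

lemma min_sq_le {α : ℝ} (hα : α ∈ Set.Ioo (0:ℝ) 1) (n : ℤ) :
    (min α (1-α))^2 ≤ (α - (n:ℝ))^2 := by
  
  have h0 : (0:ℝ) < α := hα.1
  have h1 : α < 1 := hα.2
  have hm1 : min α (1-α) ≤ α := min_le_left _ _
  have hm2 : min α (1-α) ≤ 1 - α := min_le_right _ _
  have hm0 : 0 ≤ min α (1-α) := le_min h0.le (by linarith)
  rcases le_or_gt (n:ℝ) 0 with hn | hn
  · nlinarith
  · have hn1 : (1:ℝ) ≤ (n:ℝ) := by exact_mod_cast hn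
    nlinarith

/-! ### Parseval for continuous periodic functions -/

lemma parseval_periodic {f : ℝ → ℂ} (hf : Continuous f) (hper : Function.Periodic f (2*π)) :
    Summable (fun n : ℤ => ‖fourierCoeffOn hab2pi f n‖^2) ∧
    ∫ θ in Ioo (-π) π, ‖f θ‖^2 = (2*π) * ∑' n : ℤ, ‖fourierCoeffOn hab2pi f n‖^2 := by
  
  haveI : Fact (0 < 2*π) := ⟨by linarith [Real.pi_pos]⟩
  have hπ := Real.pi_pos
  have hend : f (-π) = f (-π + 2*π) := (hper (-π)).symm
  set G : C(AddCircle (2*π), ℂ) :=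
    ⟨AddCircle.liftIco (2*π) (-π) f, AddCircle.liftIco_continuous hend hf.continuousOn⟩ with hG
  have hcoeff : ∀ n : ℤ, fourierCoeff (G : AddCircle (2*π) → ℂ) n = fourierCoeffOn hab2pi f n := by
    intro n
    exact fourierCoeff_liftIco_eq f n
  set Gp := ContinuousMap.toLp (E := ℂ) 2 haarAddCircle ℂ G with hGp
  have hcoeff2 : ∀ n : ℤ, fourierCoeff (Gp : AddCircle (2*π) → ℂ) n = fourierCoeffOn hab2pi f n := by
    intro n
    rw [fourierCoeff_toLp]
    exact hcoeff n
  have hsum : Summable (fun n : ℤ => ‖fourierCoeffOn hab2pi f n‖^2) := by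
    have hm := lp.memℓp (fourierBasis.repr Gp)
    rw [memℓp_gen_iff (by norm_num)] at hm
    have he : (fun n : ℤ => ‖(fourierBasis.repr Gp) n‖ ^ (2:ENNReal).toReal)
        = fun n : ℤ => ‖fourierCoeffOn hab2pi f n‖^2 := by
      funext n
      rw [fourierBasis_repr, hcoeff2 n]
      norm_num
    rwa [he] at hm
  refine ⟨hsum, ?_⟩
  have hpar := tsum_sq_fourierCoeff Gp
  have h1 : ∫ θ in Ioo (-π) π, ‖f θ‖^2
      = ∫ θ in (-π)..(-π + 2*π), ‖(G : AddCircle (2*π) → ℂ) θ‖^2 := by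
    rw [intervalIntegral.integral_of_le (by linarith), integral_Ioc_eq_integral_Ioo]
    have h2π : -π + 2*π = π := by ring
    rw [h2π]
    refine setIntegral_congr_fun measurableSet_Ioo (fun θ hθ => ?_)
    have hmem : θ ∈ Ico (-π) (-π + 2*π) := ⟨hθ.1.le, by rw [h2π]; exact hθ.2⟩
    rw [show (G : AddCircle (2*π) → ℂ) (θ : AddCircle (2*π)) = f θ from
      AddCircle.liftIco_coe_apply hmem]
  have h2 : ∫ θ in (-π)..(-π + 2*π), ‖(G : AddCircle (2*π) → ℂ) θ‖^2
      = ∫ z : AddCircle (2*π), ‖(G : AddCircle (2*π) → ℂ) z‖^2 :=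
    AddCircle.intervalIntegral_preimage (2*π) (-π) (fun z => ‖(G : AddCircle (2*π) → ℂ) z‖^2)
  have h3 : ∫ z : AddCircle (2*π), ‖(G : AddCircle (2*π) → ℂ) z‖^2
      = (2*π) * ∫ z, ‖(G : AddCircle (2*π) → ℂ) z‖^2 ∂haarAddCircle := by
    rw [AddCircle.volume_eq_smul_haarAddCircle, integral_smul_measure,
      ENNReal.toReal_ofReal (by linarith)]
    simp
  have h4 : ∫ z, ‖(G : AddCircle (2*π) → ℂ) z‖^2 ∂haarAddCircle
      = ∫ z, ‖(Gp : AddCircle (2*π) → ℂ) z‖^2 ∂haarAddCircle := by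
    apply integral_congr_ae
    filter_upwards [ContinuousMap.coeFn_toLp (p := 2) (μ := haarAddCircle) (𝕜 := ℂ) G] with z hz
    rw [hz]
  rw [h1, h2, h3, h4, ← hpar]
  congr 1
  exact tsum_congr fun n => by rw [hcoeff2 n]

/-! ### The one-dimensional spectral inequality -/

lemma circle_ineq {α : ℝ} (hα : α ∈ Set.Ioo (0:ℝ) 1) {g g' : ℝ → ℂ}
    (hg : ∀ θ, HasDerivAt g (g' θ) θ) (hg' : Continuous g')
    (hper : Function.Periodic g (2*π)) :
    (min α (1-α))^2 * ∫ θ in Ioo (-π) π, ‖g θ‖^2 ≤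
      ∫ θ in Ioo (-π) π, ‖Complex.I * g' θ + (α:ℂ) * g θ‖^2 := by
  
  haveI : Fact (0 < 2*π) := ⟨by linarith [Real.pi_pos]⟩
  have hπ := Real.pi_pos
  have hgc : Continuous g := by
    rw [continuous_iff_continuousAt]
    exact fun θ => (hg θ).continuousAt
  set h : ℝ → ℂ := fun θ => Complex.I * g' θ + (α:ℂ) * g θ with hh
  have hg'per : Function.Periodic g' (2*π) := by
    intro θ
    have h1 : HasDerivAt (fun t => g (t + 2*π)) (g' (θ + 2*π)) θ :=
      HasDerivAt.comp_add_const θ (2*π) (hg (θ + 2*π))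
    have h2 : (fun t => g (t + 2*π)) = g := funext fun t => hper t
    rw [h2] at h1
    exact h1.unique (hg θ)
  have hhc : Continuous h := (continuous_const.mul hg').add (continuous_const.mul hgc)
  have hhper : Function.Periodic h (2*π) := fun θ => by simp [hh, hper θ, hg'per θ]
  obtain ⟨hsumg, hparg⟩ := parseval_periodic hgc hper
  obtain ⟨hsumh, hparh⟩ := parseval_periodic hhc hhper
  -- Fourier coefficients of the derivative
  have hB : ∀ n : ℤ, fourierCoeffOn hab2pi g' n
      = Complex.I * n * fourierCoeffOn hab2pi g n := by
    intro n
    by_cases hn : n = 0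
    · subst hn
      have hig : ∫ x in (-π)..(-π+2*π), g' x = g (-π+2*π) - g (-π) :=
        intervalIntegral.integral_eq_sub_of_hasDerivAt (fun x _ => hg x)
          (hg'.intervalIntegrable _ _)
      rw [fourierCoeffOn_eq_integral]
      simp only [neg_zero, fourier_zero, one_smul]
      rw [hig, hper (-π), sub_self]
      simp
    · have hf := fourierCoeffOn_of_hasDerivAt hab2pi hn (fun x _ => hg x)
        (hg'.intervalIntegrable _ _)
      rw [show g (-π + 2*π) - g (-π) = 0 by rw [hper (-π), sub_self], mul_zero, zero_sub] at hf
      have hπc : ((π:ℝ):ℂ) ≠ 0 := Complex.ofReal_ne_zero.mpr pi_ne_zero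
      have hnc : ((n:ℤ):ℂ) ≠ 0 := Int.cast_ne_zero.mpr hn
      have hden : (-2 * (π:ℂ) * Complex.I * (n:ℂ)) ≠ 0 :=
        mul_ne_zero (mul_ne_zero (mul_ne_zero (by norm_num) hπc) Complex.I_ne_zero) hnc
      have h2 : (-2 * (π:ℂ) * Complex.I * (n:ℂ)) * fourierCoeffOn hab2pi g n
          = -((((-π + 2*π : ℝ)) - ((-π:ℝ)) : ℂ) * fourierCoeffOn hab2pi g' n) := by
        rw [hf, ← mul_assoc, mul_one_div_cancel hden, one_mul]
      have h3 : ((((-π + 2*π : ℝ)) - ((-π:ℝ))) : ℂ) = 2*(π:ℂ) := by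
        push_cast
        ring
      rw [h3] at h2
      apply mul_left_cancel₀ (show ((2*(π:ℂ)) ≠ 0) by simpa using hπc)
      linear_combination h2
  -- linearity of Fourier coefficients
  have hrel : ∀ n : ℤ, fourierCoeffOn hab2pi h n
      = ((α:ℂ) - (n:ℂ)) * fourierCoeffOn hab2pi g n := by
    intro n
    have hfour : Continuous fun x : ℝ => (fourier (-n) (x : AddCircle (-π + 2*π - -π)) : ℂ) :=
      (map_continuous (fourier (-n))).comp (AddCircle.continuous_mk' _)
    have hint1 : IntervalIntegrable (fun x : ℝ => (fourier (-n) (x : AddCircle (-π + 2*π - -π)) : ℂ) * (Complex.I * g' x))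
        volume (-π) (-π+2*π) := (hfour.mul (continuous_const.mul hg')).intervalIntegrable _ _
    have hint2 : IntervalIntegrable (fun x : ℝ => (fourier (-n) (x : AddCircle (-π + 2*π - -π)) : ℂ) * ((α:ℂ) * g x))
        volume (-π) (-π+2*π) := (hfour.mul (continuous_const.mul hgc)).intervalIntegrable _ _
    have hlin : fourierCoeffOn hab2pi h n
        = Complex.I * fourierCoeffOn hab2pi g' n + (α:ℂ) * fourierCoeffOn hab2pi g n := by
      rw [fourierCoeffOn_eq_integral, fourierCoeffOn_eq_integral, fourierCoeffOn_eq_integral]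
      simp only [smul_eq_mul, hh]
      have c1 : ∫ x in (-π)..(-π+2*π),
            (fourier (-n) (x : AddCircle (-π + 2*π - -π)) : ℂ) * (Complex.I * g' x)
          = Complex.I * ∫ x in (-π)..(-π+2*π), (fourier (-n) (x : AddCircle (-π + 2*π - -π)) : ℂ) * g' x := by
        rw [← intervalIntegral.integral_const_mul]
        congr 1
        funext x
        ring
      have c2 : ∫ x in (-π)..(-π+2*π),
            (fourier (-n) (x : AddCircle (-π + 2*π - -π)) : ℂ) * ((α:ℂ) * g x)
          = (α:ℂ) * ∫ x in (-π)..(-π+2*π), (fourier (-n) (x : AddCircle (-π + 2*π - -π)) : ℂ) * g x := by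
        rw [← intervalIntegral.integral_const_mul]
        congr 1
        funext x
        ring
      have hsplit : ∫ x in (-π)..(-π+2*π),
            (fourier (-n) (x : AddCircle (-π + 2*π - -π)) : ℂ) * (Complex.I * g' x + (α:ℂ) * g x)
          = Complex.I * (∫ x in (-π)..(-π+2*π), (fourier (-n) (x : AddCircle (-π + 2*π - -π)) : ℂ) * g' x)
            + (α:ℂ) * ∫ x in (-π)..(-π+2*π), (fourier (-n) (x : AddCircle (-π + 2*π - -π)) : ℂ) * g x := by
        calc ∫ x in (-π)..(-π+2*π),
              (fourier (-n) (x : AddCircle (-π + 2*π - -π)) : ℂ) * (Complex.I * g' x + (α:ℂ) * g x)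
            = ∫ x in (-π)..(-π+2*π),
              ((fourier (-n) (x : AddCircle (-π + 2*π - -π)) : ℂ) * (Complex.I * g' x)
                + (fourier (-n) (x : AddCircle (-π + 2*π - -π)) : ℂ) * ((α:ℂ) * g x)) := by
              congr 1
              funext x
              ring
          _ = (∫ x in (-π)..(-π+2*π), (fourier (-n) (x : AddCircle (-π + 2*π - -π)) : ℂ) * (Complex.I * g' x))
              + ∫ x in (-π)..(-π+2*π), (fourier (-n) (x : AddCircle (-π + 2*π - -π)) : ℂ) * ((α:ℂ) * g x) :=
            intervalIntegral.integral_add hint1 hint2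
          _ = _ := by rw [c1, c2]
      rw [hsplit]
      simp only [smul_add, mul_smul_comm]
    rw [hlin, hB n]
    have : ((α:ℂ) - (n:ℂ)) * fourierCoeffOn hab2pi g n
        = Complex.I * (Complex.I * (n:ℂ) * fourierCoeffOn hab2pi g n)
          + (α:ℂ) * fourierCoeffOn hab2pi g n := by
      linear_combination (-(n:ℂ) * fourierCoeffOn hab2pi g n) * Complex.I_sq
    rw [this]
  -- norms of coefficients
  have hnorm : ∀ n : ℤ, ‖fourierCoeffOn hab2pi h n‖^2
      = (α - (n:ℝ))^2 * ‖fourierCoeffOn hab2pi g n‖^2 := by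
    intro n
    rw [hrel n, show ((α:ℂ) - (n:ℂ)) = (((α - (n:ℝ)):ℝ):ℂ) by push_cast; ring,
      norm_mul, Complex.norm_real, mul_pow, Real.norm_eq_abs, sq_abs]
  rw [hparg, hparh]
  have hle : ∀ n : ℤ, (min α (1-α))^2 * ‖fourierCoeffOn hab2pi g n‖^2
      ≤ ‖fourierCoeffOn hab2pi h n‖^2 := by
    intro n
    rw [hnorm n]
    exact mul_le_mul_of_nonneg_right (min_sq_le hα n) (by positivity)
  calc (min α (1-α))^2 * (2*π * ∑' n : ℤ, ‖fourierCoeffOn hab2pi g n‖^2)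
      = 2*π * ∑' n : ℤ, (min α (1-α))^2 * ‖fourierCoeffOn hab2pi g n‖^2 := by
        rw [tsum_mul_left]; ring
    _ ≤ 2*π * ∑' n : ℤ, ‖fourierCoeffOn hab2pi h n‖^2 := by
        refine mul_le_mul_of_nonneg_left ?_ (by positivity)
        exact Summable.tsum_le_tsum hle (hsumg.mul_left _) hsumh

/-! ### Geometry of the plane -/

/-- rotation by 90 degrees -/
def perp (v : Pl) : Pl := WithLp.toLp 2 (fun i : Fin 2 => if i = 0 then -(v 1) else v 0)

/-- the plane from a pair of reals -/
def em (p : ℝ × ℝ) : Pl := WithLp.toLp 2 (fun i : Fin 2 => if i = 0 then p.1 else p.2)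

/-- circle parametrization -/
def circ (s θ : ℝ) : Pl := em (s * cos θ, s * sin θ)

lemma em_continuous : Continuous em := by 
  have : em = fun p : ℝ × ℝ =>
      (PiLp.continuousLinearEquiv 2 ℝ (fun _ : Fin 2 => ℝ)).symm
        (fun i => if i = 0 then p.1 else p.2) := by
    funext p
    rfl
  rw [this]
  exact (PiLp.continuousLinearEquiv 2 ℝ _).symm.continuous.comp
    (continuous_pi fun i => by fin_cases i <;> simp <;> fun_prop)

lemma norm_pl_sq (v : Pl) : ‖v‖^2 = (v 0)^2 + (v 1)^2 := by 
  rw [EuclideanSpace.norm_eq, Real.sq_sqrt (by positivity)]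
  simp [Fin.sum_univ_two]

lemma norm_circ {s : ℝ} (hs : 0 ≤ s) (θ : ℝ) : ‖circ s θ‖ = s := by 
  have h := norm_pl_sq (circ s θ)
  have h0 : circ s θ 0 = s * cos θ := rfl
  have h1 : circ s θ 1 = s * sin θ := rfl
  rw [h0, h1] at h
  have hsq : ‖circ s θ‖^2 = s^2 := by
    rw [h]
    have := sin_sq_add_cos_sq θ
    nlinarith
  have hn : 0 ≤ ‖circ s θ‖ := norm_nonneg _
  nlinarith

lemma measurePreserving_em : MeasurePreserving em volume volume := by 
  have he : em = ⇑(MeasurableEquiv.toLp 2 (Fin 2 → ℝ)).symm.symm ∘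
      ⇑(MeasurableEquiv.finTwoArrow (α := ℝ)).symm := by
    funext p
    ext i
    fin_cases i <;> rfl
  rw [he]
  exact ((EuclideanSpace.volume_preserving_symm_measurableEquiv_toLp (Fin 2)).symm
      (MeasurableEquiv.toLp 2 (Fin 2 → ℝ)).symm).comp
    ((volume_preserving_finTwoArrow ℝ).symm (MeasurableEquiv.finTwoArrow (α := ℝ)))

lemma measurableEmbedding_em : MeasurableEmbedding em := by 
  have he : em = ⇑(MeasurableEquiv.toLp 2 (Fin 2 → ℝ)).symm.symm ∘
      ⇑(MeasurableEquiv.finTwoArrow (α := ℝ)).symm := by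
    funext p
    ext i
    fin_cases i <;> rfl
  rw [he]
  exact (MeasurableEquiv.toLp 2 (Fin 2 → ℝ)).symm.symm.measurableEmbedding.comp
    (MeasurableEquiv.finTwoArrow (α := ℝ)).symm.measurableEmbedding

lemma circ_hasDerivAt (s θ : ℝ) : HasDerivAt (fun t => circ s t) (perp (circ s θ)) θ := by 
  have h1 : HasDerivAt (fun t => (fun i : Fin 2 => if i = 0 then s * cos t else s * sin t))
      (fun i : Fin 2 => if i = 0 then -(s * sin θ) else s * cos θ) θ := by
    rw [hasDerivAt_pi]
    intro i
    fin_cases i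
    · simp only [show ((0:Fin 2) = 0) = True by simp, if_true]
      simpa [mul_comm] using (Real.hasDerivAt_cos θ).const_mul s
    · simp only [show ((1:Fin 2) = 0) = False by simp, if_false]
      simpa [mul_comm] using (Real.hasDerivAt_sin θ).const_mul s
  have h2 := ((PiLp.continuousLinearEquiv 2 ℝ (fun _ : Fin 2 => ℝ)).symm
    : (Fin 2 → ℝ) →L[ℝ] Pl).hasFDerivAt.comp_hasDerivAt θ h1
  exact h2

lemma circ_periodic (s : ℝ) : Function.Periodic (fun t => circ s t) (2*π) := by 
  intro t
  ext i
  fin_cases i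
  · show s * cos (t + 2*π) = s * cos t
    rw [Real.cos_add_two_pi]
  · show s * sin (t + 2*π) = s * sin t
    rw [Real.sin_add_two_pi]

lemma circ_continuous (s : ℝ) : Continuous (fun t => circ s t) := by 
  have : (fun t => circ s t) = fun t => em (s * cos t, s * sin t) := rfl
  rw [this]
  exact em_continuous.comp (by fun_prop)

/-! ### Polar coordinates on a disc -/

lemma polar_ball (F : Pl → ℝ) (hF : Continuous F) (a : Pl) {r : ℝ} (hr : 0 < r) :
    IntegrableOn (fun s => ∫ θ in Ioo (-π) π, s * F (a + circ s θ)) (Ioo 0 r) ∧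
    ∫ x in Metric.ball a r, F x
      = ∫ s in Ioo 0 r, ∫ θ in Ioo (-π) π, s * F (a + circ s θ) := by
  
  have hπ := Real.pi_pos
  set S : Set (ℝ × ℝ) := {q : ℝ × ℝ | q.1^2 + q.2^2 < r^2} with hS
  have hSm : MeasurableSet S := measurableSet_lt (by fun_prop) measurable_const
  set f2 : ℝ × ℝ → ℝ := fun p => p.1 * F (a + em (p.1 * cos p.2, p.1 * sin p.2)) with hf2
  have hf2c : Continuous f2 := by
    apply continuous_fst.mul
    exact hF.comp (continuous_const.add (em_continuous.comp (by fun_prop)))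
  have hIoo : IntegrableOn f2 (Ioo 0 r ×ˢ Ioo (-π) π) volume := by
    have h1 : IntegrableOn f2 (Icc 0 r ×ˢ Icc (-π) π) volume :=
      hf2c.continuousOn.integrableOn_compact (isCompact_Icc.prod isCompact_Icc)
    exact h1.mono_set (prod_mono Ioo_subset_Icc_self Ioo_subset_Icc_self)
  constructor
  · have h2 := hIoo
    rw [IntegrableOn, Measure.volume_eq_prod, ← Measure.prod_restrict] at h2
    exact h2.integral_prod_left
  · -- step 1 : translation
    have step1 : ∫ x in Metric.ball a r, F x = ∫ y in Metric.ball (0:Pl) r, F (a + y) := by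
      have h1 : MeasurePreserving (fun y : Pl => a + y) volume volume :=
        measurePreserving_add_left volume a
      have h2 : MeasurableEmbedding (fun y : Pl => a + y) :=
        (Homeomorph.addLeft a).measurableEmbedding
      have h3 : (fun y : Pl => a + y) ⁻¹' (Metric.ball a r) = Metric.ball 0 r := by
        ext y
        simp [Metric.mem_ball, dist_eq_norm]
      rw [← h1.setIntegral_preimage_emb h2 F (Metric.ball a r), h3]
    -- step 2 : to ℝ × ℝ
    have hsq : ∀ p : ℝ × ℝ, ‖em p‖^2 = p.1^2 + p.2^2 := by
      intro p
      rw [norm_pl_sq]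
      rfl
    have hpre : em ⁻¹' (Metric.ball (0:Pl) r) = S := by
      ext p
      simp only [mem_preimage, Metric.mem_ball, dist_zero_right, hS, mem_setOf_eq]
      constructor
      · intro hlt
        nlinarith [norm_nonneg (em p), hsq p]
      · intro hlt
        nlinarith [norm_nonneg (em p), hsq p]
    have step2 : ∫ y in Metric.ball (0:Pl) r, F (a + y)
        = ∫ p : ℝ × ℝ, Set.indicator S (fun p => F (a + em p)) p := by
      rw [← integral_indicator Metric.isOpen_ball.measurableSet]
      rw [← measurePreserving_em.integral_comp measurableEmbedding_em]
      congr 1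
      funext p
      by_cases hp : em p ∈ Metric.ball (0:Pl) r
      · have hp' : p ∈ S := by rw [← hpre]; exact hp
        rw [indicator_of_mem hp, indicator_of_mem hp']
      · have hp' : p ∉ S := by rw [← hpre]; exact hp
        rw [indicator_of_notMem hp, indicator_of_notMem hp']
    -- step 3 : polar coordinates
    have step3 : ∫ p : ℝ × ℝ, Set.indicator S (fun p => F (a + em p)) p
        = ∫ p in Ioo 0 r ×ˢ Ioo (-π) π, f2 p := by
      rw [← integral_comp_polarCoord_symm]
      have hptw : ∀ p : ℝ × ℝ,
          p.1 • Set.indicator S (fun p => F (a + em p)) (polarCoord.symm p)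
          = Set.indicator (polarCoord.symm ⁻¹' S) f2 p := by
        intro p
        by_cases hp : polarCoord.symm p ∈ S
        · rw [indicator_of_mem hp, indicator_of_mem (mem_preimage.mpr hp)]
          rfl
        · rw [indicator_of_notMem hp, indicator_of_notMem (fun hc => hp (mem_preimage.mp hc)),
            smul_zero]
      simp_rw [hptw]
      have hSm' : MeasurableSet (polarCoord.symm ⁻¹' S) := by
        have : polarCoord.symm ⁻¹' S
            = {p : ℝ × ℝ | (p.1 * cos p.2)^2 + (p.1 * sin p.2)^2 < r^2} := by
          ext p
          simp [polarCoord_symm_apply, hS]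
        rw [this]
        exact measurableSet_lt (by fun_prop) measurable_const
      rw [setIntegral_indicator hSm']
      have hset : polarCoord.target ∩ (polarCoord.symm ⁻¹' S) = Ioo 0 r ×ˢ Ioo (-π) π := by
        have htarget : polarCoord.target = Ioi (0:ℝ) ×ˢ Ioo (-π) π := rfl
        have hsymm : ∀ p : ℝ × ℝ, polarCoord.symm p = (p.1 * cos p.2, p.1 * sin p.2) :=
          fun p => rfl
        rw [htarget]
        ext p
        simp only [mem_inter_iff, mem_prod, mem_Ioi, mem_Ioo, mem_preimage, hS, mem_setOf_eq,
          hsymm]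
        constructor
        · rintro ⟨⟨h1, h2⟩, h3⟩
          have hp2 : p.1^2 < r^2 := by nlinarith [sin_sq_add_cos_sq p.2]
          exact ⟨⟨h1, by nlinarith⟩, h2⟩
        · rintro ⟨⟨h1, h4⟩, h2⟩
          have hp2 : p.1^2 < r^2 := by nlinarith
          exact ⟨⟨h1, h2⟩, by nlinarith [sin_sq_add_cos_sq p.2]⟩
      rw [hset]
    -- step 4 : Fubini
    have step4 : ∫ p in Ioo 0 r ×ˢ Ioo (-π) π, f2 p
        = ∫ s in Ioo 0 r, ∫ θ in Ioo (-π) π, f2 (s, θ) := by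
      rw [Measure.volume_eq_prod] at hIoo ⊢
      exact setIntegral_prod f2 hIoo
    rw [step1, step2, step3, step4]
    rfl

/-! ### The pointwise tangential bound -/

/-- the squared tangential part of the magnetic gradient -/
def W (α : ℝ) (a : Pl) (u : Pl → ℂ) (x : Pl) : ℝ :=
  ‖Complex.I * fderiv ℝ u x (perp (x - a)) + (α:ℂ) * u x‖^2 / ‖x - a‖^2

lemma W_le_magSq (α : ℝ) (a : Pl) (u : Pl → ℂ) (x : Pl) : W α a u x ≤ magSq α a u x := by
  
  have hmag : magSq α a u x = ‖magGrad α a u x 0‖^2 + ‖magGrad α a u x 1‖^2 := by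
    simp [magSq, Fin.sum_univ_two]
  by_cases hx : x = a
  · subst hx
    have : ‖x - x‖^2 = 0 := by simp
    rw [W, this, div_zero, hmag]
    positivity
  · set v : Pl := x - a with hv
    have hv0 : v ≠ 0 := sub_ne_zero.mpr hx
    have hρ : (0:ℝ) < ‖v‖ := norm_pos_iff.mpr hv0
    have h2 : ‖v‖^2 = (v 0)^2 + (v 1)^2 := norm_pl_sq v
    have h2' : ‖v‖^2 ≠ 0 := by positivity
    set m0 := magGrad α a u x 0 with hm0
    set m1 := magGrad α a u x 1 with hm1
    have hA : (-(v 1)) * ABpot α a x 0 + (v 0) * ABpot α a x 1 = α := by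
      simp only [ABpot, ← hv, if_pos rfl, if_neg (show (1:Fin 2) ≠ 0 by decide)]
      field_simp
      rw [h2]
      rw [if_pos trivial]
      ring
    have hperp : perp v = (-(v 1)) • EuclideanSpace.single (0 : Fin 2) (1:ℝ)
        + (v 0) • EuclideanSpace.single (1 : Fin 2) (1:ℝ) := by
      ext i
      fin_cases i <;>
        simp [perp, EuclideanSpace.single_apply]
    have hlin : fderiv ℝ u x (perp v)
        = (-(v 1)) • (fderiv ℝ u x (EuclideanSpace.single (0:Fin 2) (1:ℝ)))
          + (v 0) • fderiv ℝ u x (EuclideanSpace.single (1:Fin 2) (1:ℝ)) := by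
      rw [hperp, map_add, (fderiv ℝ u x).map_smul, (fderiv ℝ u x).map_smul]
    have hkey : Complex.I * fderiv ℝ u x (perp v) + (α:ℂ) * u x
        = ((-(v 1) : ℝ) : ℂ) * m0 + ((v 0 : ℝ) : ℂ) * m1 := by
      rw [show ((α:ℝ):ℂ) = (((-(v 1)) * ABpot α a x 0 + (v 0) * ABpot α a x 1 : ℝ) : ℂ) by
        rw [hA]]
      rw [hlin, hm0, hm1]
      simp only [magGrad, Complex.real_smul]
      push_cast
      ring
    have hCS : ‖((-(v 1):ℝ):ℂ) * m0 + ((v 0:ℝ):ℂ) * m1‖^2 ≤ ‖v‖^2 * (‖m0‖^2 + ‖m1‖^2) := by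
      have hb : ‖((-(v 1):ℝ):ℂ) * m0 + ((v 0:ℝ):ℂ) * m1‖ ≤ |v 1| * ‖m0‖ + |v 0| * ‖m1‖ := by
        refine (norm_add_le _ _).trans ?_
        rw [norm_mul, norm_mul, Complex.norm_real, Complex.norm_real]
        simp [abs_neg]
      have hbn : (0:ℝ) ≤ |v 1| * ‖m0‖ + |v 0| * ‖m1‖ := by positivity
      have hsq : ‖((-(v 1):ℝ):ℂ) * m0 + ((v 0:ℝ):ℂ) * m1‖^2
          ≤ (|v 1| * ‖m0‖ + |v 0| * ‖m1‖)^2 := by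
        have := norm_nonneg (((-(v 1):ℝ):ℂ) * m0 + ((v 0:ℝ):ℂ) * m1)
        nlinarith
      refine hsq.trans ?_
      rw [h2]
      nlinarith [sq_nonneg (|v 1| * ‖m1‖ - |v 0| * ‖m0‖), sq_abs (v 0), sq_abs (v 1),
        abs_nonneg (v 0), abs_nonneg (v 1), norm_nonneg m0, norm_nonneg m1]
    rw [W, ← hv, hkey, hmag, div_le_iff₀ (by positivity)]
    linarith [hCS]

/-! ### Continuity of the integrands -/


lemma continuous_eval (i : Fin 2) : Continuous (fun v : Pl => v i) := by
  have : (fun v : Pl => v i)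
      = (fun w : Fin 2 → ℝ => w i) ∘ ⇑(PiLp.continuousLinearEquiv 2 ℝ (fun _ : Fin 2 => ℝ)) :=
    rfl
  rw [this]
  exact (continuous_apply i).comp (PiLp.continuousLinearEquiv 2 ℝ _).continuous

lemma continuous_perp : Continuous perp := by
  have : perp = fun v => em (-(v 1), v 0) := rfl
  rw [this]
  exact em_continuous.comp (((continuous_eval 1).neg).prodMk (continuous_eval 0))

section continuity

variable {u : Pl → ℂ} (hu : ContDiff ℝ (⊤ : ℕ∞) u) {a : Pl} {ε : ℝ} (hε : 0 < ε)
  (hvan : ∀ x ∈ Metric.ball a ε, u x = 0)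

include hu hε hvan

lemma continuous_lowint (α : ℝ) : Continuous (fun x => ‖u x‖^2 / ‖x - a‖^2) := by 
  have hball : ∀ y ∈ Metric.ball a ε, fderiv ℝ u y = 0 := by
    intro y hy
    have hev : u =ᶠ[𝓝 y] (fun _ => (0:ℂ)) := by
      filter_upwards [Metric.isOpen_ball.mem_nhds hy] with z hz using hvan z hz
    rw [hev.fderiv_eq, fderiv_fun_const]
    rfl
  have hne : ∀ x : Pl, x ≠ a → ‖x - a‖^2 ≠ 0 := fun x hx =>
    pow_ne_zero 2 (norm_ne_zero_iff.mpr (sub_ne_zero.mpr hx))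
  rw [continuous_iff_continuousAt]
  intro x
  by_cases hx : x = a
  · subst hx
    refine Filter.EventuallyEq.continuousAt (y := (0:ℝ)) ?_
    filter_upwards [Metric.isOpen_ball.mem_nhds (Metric.mem_ball_self hε)] with y hy
    rw [hvan y hy]
    simp
  · exact ((hu.continuous.norm.pow 2).continuousAt).div (by fun_prop) (hne x hx)

lemma continuous_W (α : ℝ) : Continuous (W α a u) := by 
  have hball : ∀ y ∈ Metric.ball a ε, fderiv ℝ u y = 0 := by
    intro y hy
    have hev : u =ᶠ[𝓝 y] (fun _ => (0:ℂ)) := by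
      filter_upwards [Metric.isOpen_ball.mem_nhds hy] with z hz using hvan z hz
    rw [hev.fderiv_eq, fderiv_fun_const]
    rfl
  have hne : ∀ x : Pl, x ≠ a → ‖x - a‖^2 ≠ 0 := fun x hx =>
    pow_ne_zero 2 (norm_ne_zero_iff.mpr (sub_ne_zero.mpr hx))
  rw [continuous_iff_continuousAt]
  intro x
  by_cases hx : x = a
  · subst hx
    refine Filter.EventuallyEq.continuousAt (y := (0:ℝ)) ?_
    filter_upwards [Metric.isOpen_ball.mem_nhds (Metric.mem_ball_self hε)] with y hy
    rw [W, hvan y hy, hball y hy]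
    simp
  · have h1 : Continuous fun y : Pl => fderiv ℝ u y (perp (y - a)) :=
      (hu.continuous_fderiv (by simp)).clm_apply
        (continuous_perp.comp (continuous_id.sub continuous_const))
    have hnum : Continuous fun y : Pl =>
        ‖Complex.I * fderiv ℝ u y (perp (y - a)) + (α:ℂ) * u y‖^2 := by
      exact (((continuous_const.mul h1).add (continuous_const.mul hu.continuous)).norm).pow 2
    exact (hnum.continuousAt).div (by fun_prop) (hne x hx)

lemma continuous_magSq (α : ℝ) : Continuous (magSq α a u) := by 
  have hball : ∀ y ∈ Metric.ball a ε, fderiv ℝ u y = 0 := by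
    intro y hy
    have hev : u =ᶠ[𝓝 y] (fun _ => (0:ℂ)) := by
      filter_upwards [Metric.isOpen_ball.mem_nhds hy] with z hz using hvan z hz
    rw [hev.fderiv_eq, fderiv_fun_const]
    rfl
  have hne : ∀ x : Pl, x ≠ a → ‖x - a‖^2 ≠ 0 := fun x hx =>
    pow_ne_zero 2 (norm_ne_zero_iff.mpr (sub_ne_zero.mpr hx))
  rw [continuous_iff_continuousAt]
  intro x
  by_cases hx : x = a
  · subst hx
    refine Filter.EventuallyEq.continuousAt (y := (0:ℝ)) ?_
    filter_upwards [Metric.isOpen_ball.mem_nhds (Metric.mem_ball_self hε)] with y hy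
    have hz : ∀ j : Fin 2, magGrad α x u y j = 0 := by
      intro j
      rw [magGrad, hvan y hy, hball y hy]
      simp
    simp [magSq, Fin.sum_univ_two, hz]
  · have hG : ∀ j : Fin 2, ContinuousAt (fun y => magGrad α a u y j) x := by
      intro j
      have h1 : Continuous fun y : Pl => fderiv ℝ u y (EuclideanSpace.single j (1:ℝ)) :=
        (hu.continuous_fderiv (by simp)).clm_apply continuous_const
      have h2 : ContinuousAt (fun y : Pl => ABpot α a y j) x := by
        have hc : ContinuousAt (fun y : Pl => α / ‖y - a‖^2) x :=
          ContinuousAt.div (by fun_prop) (by fun_prop) (hne x hx)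
        have hc2 : Continuous fun y : Pl => (if j = 0 then -((y - a) 1) else (y - a) 0) := by
          by_cases hj : j = 0
          · simp only [hj, if_true]
            exact (((continuous_eval 1).comp (continuous_id.sub continuous_const)).neg)
          · simp only [hj, if_false]
            exact ((continuous_eval 0).comp (continuous_id.sub continuous_const))
        exact hc.mul hc2.continuousAt
      exact ((continuous_const.mul h1).continuousAt).add
        ((Complex.continuous_ofReal.continuousAt.comp h2).mul hu.continuous.continuousAt)
    have hrep : magSq α a u = fun y => ‖magGrad α a u y 0‖^2 + ‖magGrad α a u y 1‖^2 := by
      funext y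
      simp [magSq, Fin.sum_univ_two]
    rw [hrep]
    exact (((hG 0).norm).pow 2).add (((hG 1).norm).pow 2)

end continuity

end HardyAB

open HardyAB

/-- Hardy inequality for Aharonov–Bohm potentials. -/
theorem hardy_inequality_AB (α : ℝ) (hα : α ∈ Set.Ioo (0:ℝ) 1) (hα2 : α ≠ 1/2)
    (r : ℝ) (hr : 0 < r) (a : Pl)
    (u : Pl → ℂ) (hu : ContDiff ℝ (⊤ : ℕ∞) u)
    (hvan : ∃ ε > (0:ℝ), ∀ x ∈ Metric.ball a ε, u x = 0) :
    (sInf {x : ℝ | ∃ j : ℤ, x = |(j:ℝ) - α|})^2 *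
        ∫ x in Metric.ball a r, ‖u x‖^2 / ‖x - a‖^2 ≤
      ∫ x in Metric.ball a r, magSq α a u x := by
  obtain ⟨ε, hε, hvan⟩ := hvan
  rw [sInf_eq hα]
  have hc0 : 0 ≤ min α (1 - α) := le_min hα.1.le (by linarith [hα.2])
  have hFlow : Continuous (fun x : Pl => ‖u x‖^2 / ‖x - a‖^2) := continuous_lowint hu hε hvan α
  have hW : Continuous (W α a u) := continuous_W hu hε hvan α
  have hM : Continuous (magSq α a u) := continuous_magSq hu hε hvan α
  obtain ⟨hIlow, hplow⟩ := polar_ball _ hFlow a hr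
  obtain ⟨hIW, hpW⟩ := polar_ball _ hW a hr
  have hWle : ∫ x in Metric.ball a r, W α a u x ≤ ∫ x in Metric.ball a r, magSq α a u x := by
    refine setIntegral_mono_on ?_ ?_ measurableSet_ball (fun x _ => W_le_magSq α a u x)
    · exact (hW.continuousOn.integrableOn_compact (isCompact_closedBall a r)).mono_set
        Metric.ball_subset_closedBall
    · exact (hM.continuousOn.integrableOn_compact (isCompact_closedBall a r)).mono_set
        Metric.ball_subset_closedBall
  have hslice : ∀ s ∈ Ioo (0:ℝ) r,
      (min α (1-α))^2 * ∫ θ in Ioo (-π) π,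
          s * ((fun x : Pl => ‖u x‖^2 / ‖x - a‖^2) (a + circ s θ))
        ≤ ∫ θ in Ioo (-π) π, s * W α a u (a + circ s θ) := by
    intro s hs
    have hs0 : (0:ℝ) < s := hs.1
    set g : ℝ → ℂ := fun θ => u (a + circ s θ) with hgdef
    set g' : ℝ → ℂ := fun θ => fderiv ℝ u (a + circ s θ) (perp (circ s θ)) with hg'def
    have hgD : ∀ θ, HasDerivAt g (g' θ) θ := by
      intro θ
      have h1 : HasDerivAt (fun t => a + circ s t) (perp (circ s θ)) θ :=
        (circ_hasDerivAt s θ).const_add a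
      exact ((hu.differentiable (by simp) (a + circ s θ)).hasFDerivAt).comp_hasDerivAt θ h1
    have hg'c : Continuous g' :=
      ((hu.continuous_fderiv (by simp)).comp
        (continuous_const.add (circ_continuous s))).clm_apply
        (continuous_perp.comp (circ_continuous s))
    have hgper : Function.Periodic g (2*π) := by
      intro θ
      exact congrArg u (congrArg (fun z => a + z) (circ_periodic s θ))
    have hkey := circle_ineq hα hgD hg'c hgper
    have e1 : (∫ θ in Ioo (-π) π, s * ((fun x : Pl => ‖u x‖^2 / ‖x - a‖^2) (a + circ s θ)))
        = (1/s) * ∫ θ in Ioo (-π) π, ‖g θ‖^2 := by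
      rw [← MeasureTheory.integral_const_mul]
      refine setIntegral_congr_fun measurableSet_Ioo (fun θ _ => ?_)
      show s * (‖u (a + circ s θ)‖^2 / ‖(a + circ s θ) - a‖^2) = (1/s) * ‖g θ‖^2
      rw [add_sub_cancel_left, norm_circ hs0.le]
      have : ‖g θ‖ = ‖u (a + circ s θ)‖ := rfl
      rw [this]
      field_simp
    have e2 : (∫ θ in Ioo (-π) π, s * W α a u (a + circ s θ))
        = (1/s) * ∫ θ in Ioo (-π) π, ‖Complex.I * g' θ + (α:ℂ) * g θ‖^2 := by
      rw [← MeasureTheory.integral_const_mul]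
      refine setIntegral_congr_fun measurableSet_Ioo (fun θ _ => ?_)
      show s * (‖Complex.I * fderiv ℝ u (a + circ s θ) (perp ((a + circ s θ) - a))
          + (α:ℂ) * u (a + circ s θ)‖^2 / ‖(a + circ s θ) - a‖^2)
        = (1/s) * ‖Complex.I * g' θ + (α:ℂ) * g θ‖^2
      rw [add_sub_cancel_left, norm_circ hs0.le]
      have : ‖Complex.I * g' θ + (α:ℂ) * g θ‖
          = ‖Complex.I * fderiv ℝ u (a + circ s θ) (perp (circ s θ))
              + (α:ℂ) * u (a + circ s θ)‖ := rfl
      rw [← this]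
      field_simp
    rw [e1, e2]
    calc (min α (1-α))^2 * ((1/s) * ∫ θ in Ioo (-π) π, ‖g θ‖^2)
        = (1/s) * ((min α (1-α))^2 * ∫ θ in Ioo (-π) π, ‖g θ‖^2) := by ring
      _ ≤ (1/s) * ∫ θ in Ioo (-π) π, ‖Complex.I * g' θ + (α:ℂ) * g θ‖^2 := by
          exact mul_le_mul_of_nonneg_left hkey (by positivity)
  calc (min α (1-α))^2 * ∫ x in Metric.ball a r, ‖u x‖^2 / ‖x - a‖^2
      = (min α (1-α))^2 * ∫ s in Ioo 0 r, ∫ θ in Ioo (-π) π,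
          s * ((fun x : Pl => ‖u x‖^2 / ‖x - a‖^2) (a + circ s θ)) := by rw [hplow]
    _ = ∫ s in Ioo 0 r, (min α (1-α))^2 * ∫ θ in Ioo (-π) π,
          s * ((fun x : Pl => ‖u x‖^2 / ‖x - a‖^2) (a + circ s θ)) := by
        rw [MeasureTheory.integral_const_mul]
    _ ≤ ∫ s in Ioo 0 r, ∫ θ in Ioo (-π) π, s * W α a u (a + circ s θ) := by
        refine setIntegral_mono_on ?_ hIW measurableSet_Ioo hslice
        exact hIlow.const_mul _
    _ = ∫ x in Metric.ball a r, W α a u x := hpW.symm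
    _ ≤ ∫ x in Metric.ball a r, magSq α a u x := hWle

end
end

section
/- Let a ∈ ℝ² \ {0}, R > 1, and write a = |a|(cos θ_a, sin θ_a). For every point x = a + R|a|(cos t, sin t) on ∂D_{R|a|}(a), one has | 1 - (x · (x-a))/(|x| |x-a|) | ≤ 1/(R-1). -/
open Real
open scoped RealInnerProductSpace

set_option maxHeartbeats 1000000 in
/-- For `x = a + R|a|(cos t, sin t)` on `∂D_{R|a|}(a)` with `R > 1`,
`|1 - (x·(x-a))/(|x||x-a|)| ≤ 1/(R-1)`. -/
theorem boundary_angle_estimate (a : EuclideanSpace ℝ (Fin 2)) (ha : a ≠ 0)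
    (R : ℝ) (hR : 1 < R) (t : ℝ) :
    |1 - (⟪a + (R*‖a‖) • ((WithLp.equiv 2 (Fin 2 → ℝ)).symm ![Real.cos t, Real.sin t]),
            (a + (R*‖a‖) • ((WithLp.equiv 2 (Fin 2 → ℝ)).symm ![Real.cos t, Real.sin t])) - a⟫) /
          (‖a + (R*‖a‖) • ((WithLp.equiv 2 (Fin 2 → ℝ)).symm ![Real.cos t, Real.sin t])‖ *
           ‖(a + (R*‖a‖) • ((WithLp.equiv 2 (Fin 2 → ℝ)).symm ![Real.cos t, Real.sin t])) - a‖)|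
      ≤ 1/(R-1) := by
  set u : EuclideanSpace ℝ (Fin 2) :=
    (WithLp.equiv 2 (Fin 2 → ℝ)).symm ![Real.cos t, Real.sin t] with hu_def
  have hu : ‖u‖ = 1 := by
    rw [hu_def, EuclideanSpace.norm_eq]
    simp [Fin.sum_univ_two, sq_abs]
  have hc : (0:ℝ) < ‖a‖ := norm_pos_iff.mpr ha
  set c : ℝ := ‖a‖ with hc_def
  set r : ℝ := R * c with hr_def
  have hr : 0 < r := by positivity
  set s : ℝ := ⟪a, u⟫ with hs_def
  have hs : |s| ≤ c := by
    have h := abs_real_inner_le_norm a u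
    rw [hu, mul_one] at h
    exact h
  have hsub : (a + r • u) - a = r • u := add_sub_cancel_left a (r • u)
  have hinner : ⟪a + r • u, (a + r • u) - a⟫ = r * s + r ^ 2 := by
    rw [hsub, inner_add_left, real_inner_smul_right, real_inner_smul_left,
      real_inner_smul_right, real_inner_self_eq_norm_sq, hu]
    ring
  have hnorm_ru : ‖r • u‖ = r := by
    rw [norm_smul, hu, Real.norm_eq_abs, abs_of_pos hr]; ring
  have hnorm_sub : ‖(a + r • u) - a‖ = r := by rw [hsub, hnorm_ru]
  set N : ℝ := ‖a + r • u‖ with hN_def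
  have hNsq : N ^ 2 = c ^ 2 + 2 * r * s + r ^ 2 := by
    rw [hN_def, norm_add_sq_real, real_inner_smul_right, hnorm_ru, ← hs_def, ← hc_def]
    ring
  have hNlb : (R - 1) * c ≤ N := by
    have h1 : ‖r • u‖ ≤ ‖a + r • u‖ + ‖a‖ := by
      calc ‖r • u‖ = ‖(a + r • u) - a‖ := by rw [hsub]
      _ ≤ ‖a + r • u‖ + ‖a‖ := norm_sub_le _ _
    rw [hnorm_ru] at h1
    have : r = R * c := hr_def
    linarith
  have hN : 0 < N := lt_of_lt_of_le (by nlinarith) hNlb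
  rw [hinner, hnorm_sub]
  have habs := abs_le.mp hs
  have hsr : 0 < s + r := by nlinarith
  have h1 : s + r ≤ N := by nlinarith [hNsq, habs.1, habs.2, hN]
  have hdiv : (r * s + r ^ 2) / (N * r) = (s + r) / N := by
    rw [show r * s + r ^ 2 = (s + r) * r by ring, show N * r = N * r from rfl,
      mul_div_mul_right _ _ (ne_of_gt hr)]
  rw [hdiv]
  have h2 : 0 ≤ 1 - (s + r) / N := by
    rw [sub_nonneg, div_le_one hN]; exact h1
  rw [abs_of_nonneg h2]
  have hR1 : (0:ℝ) < R - 1 := by linarith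
  have key : (R - 2) * N ≤ (R - 1) * (s + r) := by
    rcases le_or_gt R 2 with h | h
    · nlinarith
    · have hA : 0 ≤ (R - 2) * N := mul_nonneg (by linarith) hN.le
      have hB : 0 < (R - 1) * (s + r) := by positivity
      have hNsq' : ((R - 1) * c) ^ 2 ≤ N ^ 2 := pow_le_pow_left₀ (by positivity) hNlb 2
      have hsr2 : ((R - 1) * (s + r)) ^ 2 = (R - 1) ^ 2 * N ^ 2 - (R - 1) ^ 2 * (c ^ 2 - s ^ 2) := by
        rw [hNsq, hr_def]; ring
      have e2 : (R - 1) ^ 2 * (c ^ 2 - s ^ 2) ≤ (R - 1) ^ 2 * c ^ 2 := by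
        nlinarith [sq_nonneg s, sq_nonneg (R - 1)]
      have hsq : ((R - 2) * N) ^ 2 ≤ ((R - 1) * (s + r)) ^ 2 := by
        rw [hsr2]
        nlinarith [e2, hNsq', mul_nonneg (show (0:ℝ) ≤ 2 * R - 4 by linarith) (sq_nonneg N)]
      exact (pow_le_pow_iff_left₀ hA hB.le two_ne_zero).mp hsq
  rw [show 1 - (s + r) / N = (N - (s + r)) / N by field_simp,
    div_le_div_iff₀ hN hR1]
  nlinarith [key]
end
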